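/- arXiv:2110.09582 — 4 statements merged into one kernel-verified Lean document; each statement's English description precedes it below -/
import Mathlib

section
/- Let ε > 0 and u ≥ 0. Let (x, s) be a solution of (S) with x(0) ∈ [0,∞)^n and s(0) ∈ [0,1]. Then x(t) ∈ [0,∞)^n for all t ≥ 0; moreover, if there exists 1 ≤ i ≤ n with x_i(0) > 0, then for every t > 0 one has x_j(t) > 0 for every 1 ≤ j ≤ n. -/
open Matrix Filter Set Topology Asymptotics

noncomputable section

/-- The mutation matrix `T` (discrete Neumann Laplacian): `T i j = 1` if `|i-j| = 1`,
diagonal entries `-1` at the ends and `-2` inside (minus number of neighbors), `0` otherwise. -/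
def mutT (n : ℕ) : Matrix (Fin n) (Fin n) ℝ :=
  Matrix.of fun i j =>
    if ((i : ℕ) + 1 = (j : ℕ) ∨ (j : ℕ) + 1 = (i : ℕ)) then 1
    else if i = j then
      -((if 0 < (i : ℕ) then (1 : ℝ) else 0) + (if (i : ℕ) + 1 < n then (1 : ℝ) else 0))
    else 0

/-- Monod kinetics `μ(s) = m s / (a + s)`. -/
def monod (m a s : ℝ) : ℝ := m * s / (a + s)

/-- The largest eigenvalue of a (symmetric) real matrix. -/
def maxEig {n : ℕ} (A : Matrix (Fin n) (Fin n) ℝ) : ℝ :=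
  sSup {t : ℝ | ∃ v : Fin n → ℝ, v ≠ 0 ∧ A.mulVec v = t • v}

/-- The matrix `B(s,u,ε) = diag(μ₁(s),…,μₙ(s)) - u Iₙ + ε T`. -/
def Bmat (n : ℕ) (m a : Fin n → ℝ) (s u ε : ℝ) : Matrix (Fin n) (Fin n) ℝ :=
  Matrix.diagonal (fun i => monod (m i) (a i) s) - u • (1 : Matrix (Fin n) (Fin n) ℝ)
    + ε • mutT n

/-- `(x, s)` is a solution of the chemostat system with mutation (S). -/
def IsSol (n : ℕ) (m a : Fin n → ℝ) (ε u : ℝ) (x : ℝ → Fin n → ℝ) (s : ℝ → ℝ) : Prop :=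
  ∀ t : ℝ, 0 ≤ t →
    (∀ i, HasDerivAt (fun τ => x τ i)
        ((monod (m i) (a i) (s t) - u) * x t i + ε * (mutT n).mulVec (x t) i) t) ∧
    HasDerivAt s (-(∑ j, monod (m j) (a j) (s t) * x t j) + u * (1 - s t)) t

/-- Admissible initial conditions `D = (ℝ₊ⁿ \ {0}) × [0,1]`. -/
def InD (n : ℕ) (x0 : Fin n → ℝ) (s0 : ℝ) : Prop :=
  (∀ i, 0 ≤ x0 i) ∧ x0 ≠ 0 ∧ s0 ∈ Set.Icc (0 : ℝ) 1

/-!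
Nonnegativity: shift every coordinate of the state `(s, x)` by `w(t) = δ e^{K t}` with
`K > ∑ mⱼ`. On each face of the shifted orthant the vector field points strictly inward: on a
species face because `T` has zero row sums and nonnegative off-diagonal entries and `μᵢ ≤ mᵢ`
above `-aᵢ`; on the substrate face because `μⱼ(-w) xⱼ ≤ mⱼ w` once `xⱼ ≥ -w`. So the shifted
state never leaves the orthant, and `δ → 0` gives nonnegativity.

Positivity: with `K = u + 2ε`, each `e^{K t} xⱼ(t)` is nondecreasing, and strictly increasing as
soon as a neighbour `xⱼ₊₁` or `xⱼ₋₁` is positive, so positivity spreads along the chain `1 – … – n`.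
-/

open Real

namespace Matrix

variable {ι : Type*} [Fintype ι] [DecidableEq ι] {A : Matrix ι ι ℝ} {v : ι → ℝ} {j : ι}

lemma mulVec_apply_eq_diag_add_sum_erase :
    (A *ᵥ v) j = A j j * v j + ∑ l ∈ Finset.univ.erase j, A j l * v l := by
  rw [mulVec, dotProduct]
  exact (Finset.add_sum_erase _ (fun l => A j l * v l) (Finset.mem_univ j)).symm

lemma diag_mul_le_mulVec_apply (hA : ∀ l ≠ j, 0 ≤ A j l) (hv : 0 ≤ v) :
    A j j * v j ≤ (A *ᵥ v) j := by
  rw [mulVec_apply_eq_diag_add_sum_erase]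
  have : 0 ≤ ∑ l ∈ Finset.univ.erase j, A j l * v l :=
    Finset.sum_nonneg fun l hl => mul_nonneg (hA l (Finset.ne_of_mem_erase hl)) (hv l)
  linarith

lemma diag_mul_add_mul_le_mulVec_apply (hA : ∀ l ≠ j, 0 ≤ A j l) (hv : 0 ≤ v) {k : ι}
    (hkj : k ≠ j) : A j j * v j + A j k * v k ≤ (A *ᵥ v) j := by
  rw [mulVec_apply_eq_diag_add_sum_erase]
  gcongr
  exact Finset.single_le_sum (f := fun l => A j l * v l)
    (fun l hl => mul_nonneg (hA l (Finset.ne_of_mem_erase hl)) (hv l))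
    (Finset.mem_erase.mpr ⟨hkj, Finset.mem_univ k⟩)

end Matrix

lemma monod_nonneg {m a s : ℝ} (hm : 0 ≤ m) (ha : 0 ≤ a) (hs : 0 ≤ s) : 0 ≤ monod m a s := by
  unfold monod; positivity

lemma monod_le {m a s : ℝ} (hm : 0 ≤ m) (ha : 0 ≤ a) (has : 0 < a + s) : monod m a s ≤ m := by
  rw [monod, div_le_iff₀ has]
  nlinarith

lemma monod_neg_mul_le {m a δ y : ℝ} (hm : 0 ≤ m) (hδ : 0 ≤ δ) (hδa : 2 * δ < a)
    (hy : -δ ≤ y) : monod m a (-δ) * y ≤ m * δ := by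
  have hpos : 0 < a - δ := by linarith
  have hc : monod m a (-δ) = -(m * δ / (a - δ)) := by
    rw [monod, ← sub_eq_add_neg]; ring
  have hc0 : 0 ≤ m * δ / (a - δ) := by positivity
  have hcm : m * δ / (a - δ) ≤ m := by
    rw [div_le_iff₀ hpos]; nlinarith
  rw [hc]
  nlinarith

lemma HasDerivWithinAt.eventually_lt_right {f : ℝ → ℝ} {f' t : ℝ}
    (hf : HasDerivWithinAt f f' (Ici t) t) (hf' : 0 < f') : ∀ᶠ τ in 𝓝[>] t, f t < f τ := by
  have hslope := (hasDerivWithinAt_iff_tendsto_slope' (lt_irrefl t)).mp hf.Ioi_of_Ici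
  filter_upwards [hslope.eventually (eventually_gt_nhds hf'), self_mem_nhdsWithin] with τ hslope hτ
  rw [slope_def_field, div_pos_iff_of_pos_right (sub_pos.mpr hτ)] at hslope
  linarith

theorem nonneg_of_deriv_pos_of_eq_zero {ι : Type*} [Finite ι] {g g' : ι → ℝ → ℝ} {a b : ℝ}
    (hg : ∀ k, ContinuousOn (g k) (Icc a b))
    (hg' : ∀ k, ∀ t ∈ Ico a b, HasDerivWithinAt (g k) (g' k t) (Ici t) t)
    (ha : ∀ k, 0 ≤ g k a)
    (hzero : ∀ t ∈ Ico a b, ∀ k, (∀ l, 0 ≤ g l t) → g k t = 0 → 0 < g' k t) :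
    ∀ t ∈ Icc a b, ∀ k, 0 ≤ g k t := by
  let S : Set ℝ := (fun t k => g k t) ⁻¹' Ici 0
  have hS : IsClosed (S ∩ Icc a b) := by
    rw [inter_comm]
    exact (continuousOn_pi.mpr hg).preimage_isClosed_of_isClosed isClosed_Icc isClosed_Ici
  have hstep : ∀ t ∈ S ∩ Ico a b, S ∈ 𝓝[>] t := by
    rintro t ⟨htS, ht⟩
    replace htS : ∀ l, 0 ≤ g l t := htS
    have hgt : ∀ k, ∀ᶠ τ in 𝓝[>] t, 0 ≤ g k τ := by
      intro k
      rcases (htS k).eq_or_lt with hk | hk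
      · filter_upwards [(hg' k t ht).eventually_lt_right (hzero t ht k htS hk.symm)]
          with τ hτ using by linarith
      · exact ((hg' k t ht).continuousWithinAt.mono Ioi_subset_Ici_self).eventually
          (lt_mem_nhds hk) |>.mono fun τ hτ => hτ.le
    exact (eventually_all.mpr hgt).mono fun τ hτ => hτ
  exact fun t ht => hS.Icc_subset_of_forall_mem_nhdsWithin ha hstep ht

section MutationMatrix

variable {n : ℕ}

lemma mutT_apply_of_ne_nonneg {i j : Fin n} (h : i ≠ j) : 0 ≤ mutT n i j := by
  simp only [mutT, of_apply, if_neg h]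
  split <;> norm_num

lemma neg_two_le_mutT_apply_self (i : Fin n) : -2 ≤ mutT n i i := by
  simp only [mutT, of_apply, if_true]
  split
  · omega
  · split <;> split <;> norm_num

lemma mutT_apply_of_adjacent {i j : Fin n} (h : (i : ℕ) + 1 = j ∨ (j : ℕ) + 1 = i) :
    mutT n i j = 1 := by
  simp only [mutT, of_apply, if_pos h]

lemma mutT_apply_eq_ite (i j : Fin n) : mutT n i j =
    (if (i : ℕ) + 1 = j then 1 else 0) + (if (j : ℕ) + 1 = i then 1 else 0) -
      if i = j then (if 0 < (i : ℕ) then 1 else 0) + (if (i : ℕ) + 1 < n then 1 else 0) else 0 := by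
  simp only [mutT, of_apply]
  by_cases hij : i = j
  · subst hij; simp
  · simp only [if_neg hij, sub_zero]
    split_ifs <;> first | (exfalso; omega) | norm_num

lemma sum_mutT_apply (i : Fin n) : ∑ j, mutT n i j = 0 := by
  simp only [mutT_apply_eq_ite, Finset.sum_sub_distrib, Finset.sum_add_distrib,
    Finset.sum_ite_eq, Finset.mem_univ, if_true]
  rw [Fin.sum_univ_eq_sum_range (fun j => if (i : ℕ) + 1 = j then (1 : ℝ) else 0),
    Fin.sum_univ_eq_sum_range (fun j => if j + 1 = (i : ℕ) then (1 : ℝ) else 0),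
    Finset.sum_ite_eq]
  have hi := i.isLt
  generalize (i : ℕ) = k at *
  cases k with
  | zero => simp
  | succ p =>
    simp only [Finset.mem_range, Nat.add_right_cancel_iff, Finset.sum_ite_eq',
      show p < n by omega, ↓reduceIte, lt_add_iff_pos_left, Order.lt_add_one_iff, zero_le]
    ring

lemma mutT_mulVec_const (c : ℝ) : mutT n *ᵥ (fun _ => c) = 0 := by
  ext i
  simp [mulVec, dotProduct, ← Finset.sum_mul, sum_mutT_apply]

lemma mutT_mulVec_apply_nonneg_of_eq_neg {X : Fin n → ℝ} {w : ℝ} (hX : ∀ l, -w ≤ X l) {i : Fin n}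
    (hXi : X i = -w) : 0 ≤ (mutT n *ᵥ X) i := by
  have hshift : mutT n *ᵥ X = mutT n *ᵥ (X + fun _ => w) := by
    rw [mulVec_add, mutT_mulVec_const, add_zero]
  have := diag_mul_le_mulVec_apply (A := mutT n) (v := X + fun _ => w) (j := i)
    (fun l hl => mutT_apply_of_ne_nonneg hl.symm) (fun l => by simp only [Pi.zero_apply, Pi.add_apply]; linarith [hX l])
  simpa [hshift, hXi] using this

lemma two_mul_add_mutT_mulVec_apply_nonneg {X : Fin n → ℝ} (hX : 0 ≤ X) (j : Fin n) :
    0 ≤ 2 * X j + (mutT n *ᵥ X) j := by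
  have := diag_mul_le_mulVec_apply (A := mutT n) (j := j)
    (fun l hl => mutT_apply_of_ne_nonneg hl.symm) hX
  nlinarith [mul_le_mul_of_nonneg_right (neg_two_le_mutT_apply_self j) (hX j)]

lemma le_two_mul_add_mutT_mulVec_apply {X : Fin n → ℝ} (hX : 0 ≤ X) {j k : Fin n}
    (hjk : (j : ℕ) + 1 = k ∨ (k : ℕ) + 1 = j) : X k ≤ 2 * X j + (mutT n *ᵥ X) j := by
  have hkj : k ≠ j := by rintro rfl; omega
  have := diag_mul_add_mul_le_mulVec_apply (A := mutT n)
    (fun l hl => mutT_apply_of_ne_nonneg hl.symm) hX hkj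
  rw [mutT_apply_of_adjacent hjk] at this
  nlinarith [mul_le_mul_of_nonneg_right (neg_two_le_mutT_apply_self j) (hX j)]

end MutationMatrix

lemma Fin.iff_of_forall_iff_succ {n : ℕ} {P : Fin n → Prop}
    (h : ∀ j k : Fin n, (j : ℕ) + 1 = k → (P j ↔ P k)) (i j : Fin n) : P i ↔ P j := by
  have hdist : ∀ d, ∀ j k : Fin n, (j : ℕ) + d = k → (P j ↔ P k) := by
    intro d
    induction d with
    | zero => intro j k hjk; rw [Fin.ext hjk]
    | succ d ih =>
      intro j k hjk
      exact (h j ⟨j + 1, by omega⟩ rfl).trans (ih _ _ (by simp only; omega))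
  rcases le_total (i : ℕ) j with hij | hji
  · exact hdist _ i j (Nat.add_sub_cancel' hij)
  · exact (hdist _ j i (Nat.add_sub_cancel' hji)).symm

section Chemostat

variable {n : ℕ} {m a : Fin n → ℝ} {ε u : ℝ}

lemma species_rate_pos_of_eq_neg (hm : ∀ j, 0 ≤ m j) (ha : ∀ j, 0 ≤ a j) (hε : 0 ≤ ε)
    (hu : 0 ≤ u) {X : Fin n → ℝ} {S w K : ℝ} (hX : ∀ l, -w ≤ X l) (hS : -w ≤ S) {i : Fin n}
    (hXi : X i = -w) (hw : 0 < w) (hwa : w < a i) (hK : m i < K) :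
    0 < (monod (m i) (a i) S - u) * X i + ε * (mutT n *ᵥ X) i + K * w := by
  have hμ : monod (m i) (a i) S ≤ m i := monod_le (hm i) (ha i) (by linarith)
  have hT := mul_nonneg hε (mutT_mulVec_apply_nonneg_of_eq_neg hX hXi)
  rw [hXi]
  nlinarith

lemma substrate_rate_pos_of_eq_neg (hm : ∀ j, 0 ≤ m j) (hu : 0 ≤ u) {X : Fin n → ℝ}
    {w K : ℝ} (hX : ∀ l, -w ≤ X l) (hw : 0 < w) (hwa : ∀ j, 2 * w < a j) (hK : ∑ j, m j < K) :
    0 < -(∑ j, monod (m j) (a j) (-w) * X j) + u * (1 - -w) + K * w := by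
  have hsum : ∑ j, monod (m j) (a j) (-w) * X j ≤ (∑ j, m j) * w := by
    rw [Finset.sum_mul]
    exact Finset.sum_le_sum fun j _ => monod_neg_mul_le (hm j) hw.le (hwa j) (hX j)
  nlinarith

variable {x : ℝ → Fin n → ℝ} {s : ℝ → ℝ}

lemma IsSol.neg_exp_le (hm : ∀ j, 0 ≤ m j) (ha : ∀ j, 0 ≤ a j) (hε : 0 ≤ ε) (hu : 0 ≤ u)
    (hsol : IsSol n m a ε u x s) (hx0 : ∀ i, 0 ≤ x 0 i) (hs0 : 0 ≤ s 0) {K δ T : ℝ}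
    (hK : ∑ j, m j < K) (hδ : 0 < δ) (hδa : ∀ j, 2 * (δ * exp (K * T)) < a j) :
    ∀ t ∈ Icc 0 T, (∀ i, -(δ * exp (K * t)) ≤ x t i) ∧ -(δ * exp (K * t)) ≤ s t := by
  set w : ℝ → ℝ := fun t => δ * exp (K * t)
  have hw : ∀ t, HasDerivAt w (K * w t) t := fun t =>
    (((hasDerivAt_id t).const_mul K).exp.const_mul δ).congr_deriv (by simp only [w, id]; ring)
  have hwpos : ∀ t, 0 < w t := fun t => by positivity
  have hK0 : 0 ≤ K := (Finset.sum_nonneg fun j _ => hm j).trans hK.le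
  have hwT : ∀ t ≤ T, ∀ j, 2 * w t < a j := fun t ht j =>
    lt_of_le_of_lt (by simp only [w]; gcongr) (hδa j)
  -- `none` indexes the substrate, `some i` the species `i`
  let g : Option (Fin n) → ℝ → ℝ := fun k t => k.elim (s t) (x t) + w t
  let g' : Option (Fin n) → ℝ → ℝ := fun k t => k.elim
      (-(∑ j, monod (m j) (a j) (s t) * x t j) + u * (1 - s t))
      (fun i => (monod (m i) (a i) (s t) - u) * x t i + ε * (mutT n *ᵥ x t) i) + K * w t
  have hg : ∀ k, ∀ t, 0 ≤ t → HasDerivAt (g k) (g' k t) t := by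
    rintro (_ | i) t ht
    · exact (hsol t ht).2.add (hw t)
    · exact ((hsol t ht).1 i).add (hw t)
  have key := nonneg_of_deriv_pos_of_eq_zero (g := g) (g' := g') (a := 0) (b := T)
    (fun k t ht => (hg k t ht.1).continuousAt.continuousWithinAt)
    (fun k t ht => (hg k t ht.1).hasDerivWithinAt)
    (by rintro (_ | i) <;> simp [g, hs0, hx0, (hwpos 0).le, add_nonneg]) ?_
  · simp only [g, Option.elim] at key
    exact fun t ht => ⟨fun i => by linarith [key t ht (some i)], by linarith [key t ht none]⟩
  rintro t ⟨ht0, htT⟩ k hall hk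
  simp only [g, Option.forall, Option.elim] at hall
  have hx : ∀ l, -w t ≤ x t l := fun l => by linarith [hall.2 l]
  have hs : -w t ≤ s t := by linarith [hall.1]
  cases k with
  | none =>
    have hst : s t = -w t := by simp only [g, Option.elim] at hk; linarith
    simp only [g', Option.elim, hst]
    exact substrate_rate_pos_of_eq_neg hm hu hx (hwpos t) (hwT t htT.le) hK
  | some i =>
    have hxi : x t i = -w t := by simp only [g, Option.elim] at hk; linarith
    have hmK : m i < K :=
      (Finset.single_le_sum (fun j _ => hm j) (Finset.mem_univ i)).trans_lt hK
    exact species_rate_pos_of_eq_neg hm ha hε hu hx hs hxi (hwpos t)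
      (by linarith [hwT t htT.le i, hwpos t]) hmK

lemma IsSol.nonneg (hm : ∀ j, 0 ≤ m j) (ha : ∀ j, 0 < a j) (hε : 0 ≤ ε) (hu : 0 ≤ u)
    (hsol : IsSol n m a ε u x s) (hx0 : ∀ i, 0 ≤ x 0 i) (hs0 : 0 ≤ s 0) {t : ℝ} (ht : 0 ≤ t) :
    (∀ i, 0 ≤ x t i) ∧ 0 ≤ s t := by
  set K := ∑ j, m j + 1
  have hlim : Tendsto (fun δ => -(δ * exp (K * t))) (𝓝[>] 0) (𝓝 0) :=
    tendsto_nhdsWithin_of_tendsto_nhds <|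
      (by fun_prop : Continuous fun δ : ℝ => -(δ * exp (K * t))).tendsto' 0 0 (by simp)
  have hsmall : ∀ᶠ δ in 𝓝[>] 0, 0 < δ ∧ ∀ j, 2 * (δ * exp (K * t)) < a j := by
    refine (eventually_mem_nhdsWithin (a := 0) (s := Ioi 0)).and
      (nhdsWithin_le_nhds (eventually_all.mpr fun j => ?_))
    exact (by fun_prop : Continuous fun δ : ℝ => 2 * (δ * exp (K * t))).tendsto' 0 0 (by simp)
      |>.eventually (eventually_lt_nhds (ha j))
  have hbound : ∀ᶠ δ in 𝓝[>] 0,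
      (∀ i, -(δ * exp (K * t)) ≤ x t i) ∧ -(δ * exp (K * t)) ≤ s t :=
    hsmall.mono fun δ ⟨hδ, hδa⟩ => hsol.neg_exp_le hm (fun j => (ha j).le) hε hu hx0 hs0
      (lt_add_one _) hδ hδa t ⟨ht, le_rfl⟩
  exact ⟨fun i => le_of_tendsto hlim (hbound.mono fun _ h => h.1 i),
    le_of_tendsto hlim (hbound.mono fun _ h => h.2)⟩

lemma IsSol.hasDerivAt_exp_mul (hsol : IsSol n m a ε u x s) (K : ℝ) (j : Fin n) {t : ℝ}
    (ht : 0 ≤ t) : HasDerivAt (fun τ => exp (K * τ) * x τ j)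
      (exp (K * t) * ((monod (m j) (a j) (s t) - u + K) * x t j + ε * (mutT n *ᵥ x t) j)) t :=
  (((hasDerivAt_id t).const_mul K).exp.mul ((hsol t ht).1 j)).congr_deriv (by simp only [id]; ring)

lemma IsSol.monotoneOn_exp_mul (hm : ∀ j, 0 ≤ m j) (ha : ∀ j, 0 ≤ a j) (hε : 0 ≤ ε)
    (hsol : IsSol n m a ε u x s) (hnonneg : ∀ t, 0 ≤ t → (∀ i, 0 ≤ x t i) ∧ 0 ≤ s t)
    (j : Fin n) : MonotoneOn (fun τ => exp ((u + 2 * ε) * τ) * x τ j) (Ici 0) := by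
  refine monotoneOn_of_hasDerivWithinAt_nonneg (convex_Ici 0)
    (fun τ hτ => (hsol.hasDerivAt_exp_mul _ j hτ).continuousAt.continuousWithinAt)
    (fun τ hτ => (hsol.hasDerivAt_exp_mul _ j (interior_subset hτ)).hasDerivWithinAt)
    fun τ hτ => ?_
  obtain ⟨hx, hs⟩ := hnonneg τ (interior_subset hτ)
  have hμ := mul_nonneg (monod_nonneg (hm j) (ha j) hs) (hx j)
  have hT := mul_nonneg hε (two_mul_add_mutT_mulVec_apply_nonneg (X := x τ) hx j)
  have : 0 ≤ (monod (m j) (a j) (s τ) - u + (u + 2 * ε)) * x τ j + ε * (mutT n *ᵥ x τ) j := by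
    linarith
  positivity

lemma IsSol.pos_of_adjacent_pos (hm : ∀ j, 0 ≤ m j) (ha : ∀ j, 0 ≤ a j) (hε : 0 < ε)
    (hsol : IsSol n m a ε u x s) (hnonneg : ∀ t, 0 ≤ t → (∀ i, 0 ≤ x t i) ∧ 0 ≤ s t)
    {j k : Fin n} (hjk : (j : ℕ) + 1 = k ∨ (k : ℕ) + 1 = j) (hk : ∀ t, 0 < t → 0 < x t k)
    {t : ℝ} (ht : 0 < t) : 0 < x t j := by
  have hmono : StrictMonoOn (fun τ => exp ((u + 2 * ε) * τ) * x τ j) (Icc 0 t) := by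
    refine strictMonoOn_of_hasDerivWithinAt_pos (convex_Icc 0 t)
      (fun τ hτ => (hsol.hasDerivAt_exp_mul _ j hτ.1).continuousAt.continuousWithinAt)
      (fun τ hτ => (hsol.hasDerivAt_exp_mul _ j (interior_subset hτ).1).hasDerivWithinAt)
      fun τ hτ => ?_
    rw [interior_Icc] at hτ
    obtain ⟨hx, hs⟩ := hnonneg τ hτ.1.le
    have hμ := mul_nonneg (monod_nonneg (hm j) (ha j) hs) (hx j)
    have hT := mul_le_mul_of_nonneg_left (le_two_mul_add_mutT_mulVec_apply hx hjk) hε.le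
    have hxk := mul_pos hε (hk τ hτ.1)
    have : 0 < (monod (m j) (a j) (s τ) - u + (u + 2 * ε)) * x τ j + ε * (mutT n *ᵥ x τ) j := by
      linarith
    positivity
  have h0t := hmono ⟨le_rfl, ht.le⟩ ⟨ht.le, le_rfl⟩ ht
  simp only [mul_zero, exp_zero, one_mul] at h0t
  exact pos_of_mul_pos_right ((hnonneg 0 le_rfl).1 j |>.trans_lt h0t) (exp_pos _).le

lemma IsSol.pos (hm : ∀ j, 0 ≤ m j) (ha : ∀ j, 0 ≤ a j) (hε : 0 < ε)
    (hsol : IsSol n m a ε u x s) (hnonneg : ∀ t, 0 ≤ t → (∀ i, 0 ≤ x t i) ∧ 0 ≤ s t)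
    {i : Fin n} (hi : 0 < x 0 i) (j : Fin n) {t : ℝ} (ht : 0 < t) : 0 < x t j := by
  have hxi : ∀ t, 0 < t → 0 < x t i := fun t ht => by
    have h0t := hsol.monotoneOn_exp_mul hm ha hε.le hnonneg i self_mem_Ici ht.le ht.le
    simp only [mul_zero, exp_zero, one_mul] at h0t
    exact pos_of_mul_pos_right (hi.trans_le h0t) (exp_pos _).le
  refine (Fin.iff_of_forall_iff_succ (P := fun j => ∀ t, 0 < t → 0 < x t j)
    (fun j k hjk => ⟨?_, ?_⟩) i j).mp hxi t ht
  · exact fun hj t ht => hsol.pos_of_adjacent_pos hm ha hε hnonneg (Or.inr hjk) hj ht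
  · exact fun hk t ht => hsol.pos_of_adjacent_pos hm ha hε hnonneg (Or.inl hjk) hk ht

end Chemostat

theorem stmt_1_general (n : ℕ) (m a : Fin n → ℝ)
    (hm : ∀ i, 0 < m i) (ha : ∀ i, 0 < a i)
    (ε u : ℝ) (hε : 0 < ε) (hu : 0 ≤ u)
    (x : ℝ → Fin n → ℝ) (s : ℝ → ℝ) (hsol : IsSol n m a ε u x s)
    (hx0 : ∀ i, 0 ≤ x 0 i) (hs0 : s 0 ∈ Set.Icc (0 : ℝ) 1) :
    (∀ t, 0 ≤ t → ∀ i, 0 ≤ x t i) ∧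
    ((∃ i, 0 < x 0 i) → ∀ t, 0 < t → ∀ j, 0 < x t j) := by
  have hm' : ∀ i, 0 ≤ m i := fun i => (hm i).le
  have hnonneg : ∀ t, 0 ≤ t → (∀ i, 0 ≤ x t i) ∧ 0 ≤ s t :=
    fun t ht => hsol.nonneg hm' ha hε.le hu hx0 hs0.1 ht
  refine ⟨fun t ht => (hnonneg t ht).1, ?_⟩
  rintro ⟨i, hi⟩ t ht j
  exact hsol.pos hm' (fun j => (ha j).le) hε hnonneg hi j ht

/-- nonnegativity of species concentrations, and positivity of every species
for positive times as soon as one species is initially present. -/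
theorem stmt_1 (n : ℕ) (hn : 1 ≤ n) (m a : Fin n → ℝ)
    (hm : ∀ i, 0 < m i) (ha : ∀ i, 0 < a i)
    (ε u : ℝ) (hε : 0 < ε) (hu : 0 ≤ u)
    (x : ℝ → Fin n → ℝ) (s : ℝ → ℝ) (hsol : IsSol n m a ε u x s)
    (hx0 : ∀ i, 0 ≤ x 0 i) (hs0 : s 0 ∈ Set.Icc (0 : ℝ) 1) :
    (∀ t, 0 ≤ t → ∀ i, 0 ≤ x t i) ∧
    ((∃ i, 0 < x 0 i) → ∀ t, 0 < t → ∀ j, 0 < x t j) :=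
  stmt_1_general n m a hm ha ε u hε hu x s hsol hx0 hs0
end
end

section
/- For every ε > 0 and u > 0, the largest eigenvalue λ(B(1, u, ε)) satisfies max( μ̂(1) − u − 2ε, μ̄(1) − u ) ≤ λ(B(1, u, ε)) ≤ μ̂(1) − u, where μ̄(s) := (1/n) Σ_{j=1}^n μ_j(s) and μ̂(s) := max_{1≤j≤n} μ_j(s). -/
open Matrix Filter Set Topology Asymptotics

noncomputable section

/-!
The upper bound is Gershgorin's theorem: off the diagonal `T` is nonnegative, so the `k`-th
Gershgorin disc of `B(1, u, ε)` ends exactly at its row sum `μ_k(1) - u`, `T` having zero row sums.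
The lower bounds are Rayleigh quotients of the symmetric matrix `B(1, u, ε)`: at the basis vector
`e_k` with `μ_k(1) = μ̂(1)` it is `B_kk ≥ μ̂(1) - u - 2ε`, and at the all-ones vector it is the mean
row sum `μ̄(1) - u`.
-/

namespace Matrix

section Gershgorin

variable {ι : Type*} [Fintype ι] [DecidableEq ι]

theorem hasEigenvalue_toLin'_of_mulVec_eq_smul {K : Type*} [Field K] {A : Matrix ι ι K} {t : K}
    {v : ι → K} (hv : v ≠ 0) (hAv : A *ᵥ v = t • v) : Module.End.HasEigenvalue (toLin' A) t :=
  Module.End.hasEigenvalue_of_hasEigenvector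
    ⟨Module.End.mem_eigenspace_iff.2 (by rwa [toLin'_apply]), hv⟩

theorem exists_le_sum_row_of_mulVec_eq_smul {A : Matrix ι ι ℝ} (hoff : ∀ i j, i ≠ j → 0 ≤ A i j)
    {t : ℝ} {v : ι → ℝ} (hv : v ≠ 0) (hAv : A *ᵥ v = t • v) : ∃ k, t ≤ ∑ j, A k j := by
  obtain ⟨k, hk⟩ := eigenvalue_mem_ball (hasEigenvalue_toLin'_of_mulVec_eq_smul hv hAv)
  rw [Metric.mem_closedBall, Real.dist_eq] at hk
  have hradius : ∑ j ∈ Finset.univ.erase k, ‖A k j‖ = ∑ j ∈ Finset.univ.erase k, A k j :=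
    Finset.sum_congr rfl fun j hj =>
      Real.norm_of_nonneg (hoff k j (Finset.ne_of_mem_erase hj).symm)
  refine ⟨k, ?_⟩
  rw [← Finset.add_sum_erase _ _ (Finset.mem_univ k), ← hradius]
  linarith [(abs_le.1 hk).2]

end Gershgorin

variable {n : ℕ} {A : Matrix (Fin n) (Fin n) ℝ}

theorem le_maxEig {t : ℝ} {v : Fin n → ℝ} (hv : v ≠ 0) (hAv : A *ᵥ v = t • v) :
    t ≤ maxEig A :=
  le_csSup ((Module.End.finite_hasEigenvalue (toLin' A)).bddAbove.mono
    fun _ ⟨_, hw, hAw⟩ => hasEigenvalue_toLin'_of_mulVec_eq_smul hw hAw) ⟨v, hv, hAv⟩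

theorem IsHermitian.exists_eigenvalue_forall_dotProduct_le [NeZero n] (hA : A.IsHermitian) :
    ∃ t, (∃ v ≠ 0, A *ᵥ v = t • v) ∧ ∀ v, v ⬝ᵥ A *ᵥ v ≤ t * (v ⬝ᵥ v) := by
  set T := toEuclideanLin A
  have hT : T.IsSymmetric := isSymmetric_toEuclideanLin_iff.mpr hA
  set rayleigh := fun x : {x : EuclideanSpace ℝ (Fin n) // x ≠ 0} =>
    RCLike.re (inner ℝ (T x) (x : EuclideanSpace ℝ (Fin n))) /
      ‖(x : EuclideanSpace ℝ (Fin n))‖ ^ 2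
  obtain ⟨w, hw, hw0⟩ := hT.hasEigenvalue_iSup_of_finiteDimensional.exists_hasEigenvector
  refine ⟨⨆ x, rayleigh x, ⟨w.ofLp, by simpa using hw0, ?_⟩, fun v => ?_⟩
  · exact congrArg WithLp.ofLp (Module.End.mem_eigenspace_iff.1 hw)
  rcases eq_or_ne v 0 with rfl | hv
  · simp
  have hbdd : BddAbove (Set.range rayleigh) :=
    ⟨_, by
      rintro _ ⟨x, rfl⟩
      exact (le_abs_self _).trans ((LinearMap.toContinuousLinearMap T).rayleighQuotient_le_norm x)⟩
  have hpos : 0 < v ⬝ᵥ v := by simpa using dotProduct_self_star_pos_iff.2 hv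
  have hv' : WithLp.toLp 2 v ≠ 0 := by simpa using hv
  have hquot : rayleigh ⟨_, hv'⟩ = (v ⬝ᵥ A *ᵥ v) / (v ⬝ᵥ v) := by
    simp only [rayleigh, EuclideanSpace.real_norm_sq_eq]
    simp [T, EuclideanSpace.inner_eq_star_dotProduct, dotProduct, sq]
  rw [← div_le_iff₀ hpos, ← hquot]
  exact le_ciSup hbdd _

theorem IsHermitian.dotProduct_mulVec_le_maxEig_mul [NeZero n] (hA : A.IsHermitian)
    (v : Fin n → ℝ) : v ⬝ᵥ A *ᵥ v ≤ maxEig A * (v ⬝ᵥ v) := by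
  obtain ⟨t, ⟨w, hw, hAw⟩, ht⟩ := hA.exists_eigenvalue_forall_dotProduct_le
  exact (ht v).trans <| mul_le_mul_of_nonneg_right (le_maxEig hw hAw) <| by
    simpa using dotProduct_star_self_nonneg v

theorem IsHermitian.maxEig_le [NeZero n] (hA : A.IsHermitian) {c : ℝ}
    (h : ∀ (t : ℝ) (v : Fin n → ℝ), v ≠ 0 → A *ᵥ v = t • v → t ≤ c) : maxEig A ≤ c := by
  -- `maxEig A` is an `sSup`, junk `0` on an empty set: an eigenvalue has to exist.
  obtain ⟨t, ht, -⟩ := hA.exists_eigenvalue_forall_dotProduct_le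
  exact csSup_le ⟨t, ht⟩ fun s ⟨v, hv, hAv⟩ => h s v hv hAv

theorem IsHermitian.diag_le_maxEig [NeZero n] (hA : A.IsHermitian) (k : Fin n) :
    A k k ≤ maxEig A := by
  simpa using hA.dotProduct_mulVec_le_maxEig_mul (Pi.single k 1)

theorem IsHermitian.sum_div_card_le_maxEig [NeZero n] (hA : A.IsHermitian) :
    (∑ i, ∑ j, A i j) / n ≤ maxEig A := by
  have h := hA.dotProduct_mulVec_le_maxEig_mul fun _ => 1
  simp only [dotProduct, mulVec, one_mul, mul_one, Finset.sum_const, Finset.card_univ,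
    Fintype.card_fin, nsmul_eq_mul] at h
  rwa [div_le_iff₀ (Nat.cast_pos.2 (NeZero.pos n))]

theorem IsHermitian.maxEig_le_of_sum_row_le [NeZero n] (hA : A.IsHermitian)
    (hoff : ∀ i j, i ≠ j → 0 ≤ A i j) {c : ℝ} (hrow : ∀ i, ∑ j, A i j ≤ c) : maxEig A ≤ c :=
  hA.maxEig_le fun _ _ hv hAv =>
    let ⟨k, hk⟩ := exists_le_sum_row_of_mulVec_eq_smul hoff hv hAv
    hk.trans (hrow k)

end Matrix

theorem isSymm_mutT (n : ℕ) : (mutT n).IsSymm :=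
  Matrix.IsSymm.ext fun i j => by
    rcases eq_or_ne i j with rfl | h
    · rfl
    · simp [mutT, h, Ne.symm h, or_comm]

theorem mutT_nonneg_of_ne {n : ℕ} {i j : Fin n} (h : i ≠ j) : 0 ≤ mutT n i j := by
  simp only [mutT, Matrix.of_apply, if_neg h]
  split_ifs <;> norm_num

theorem neg_two_le_mutT_self {n : ℕ} (i : Fin n) : -2 ≤ mutT n i i := by
  simp only [mutT, Matrix.of_apply]
  split_ifs <;> norm_num

theorem mutT_apply {n : ℕ} (i j : Fin n) :
    mutT n i j = (if (i : ℕ) + 1 = j then 1 else 0) + (if (j : ℕ) + 1 = i then 1 else 0)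
      - if i = j then (if 0 < (i : ℕ) then 1 else 0) + (if (i : ℕ) + 1 < n then 1 else 0)
        else 0 := by
  rcases eq_or_ne i j with rfl | h
  · simp [mutT]
  · simp only [mutT, Matrix.of_apply, if_neg h, sub_zero]
    by_cases h1 : (i : ℕ) + 1 = j <;> by_cases h2 : (j : ℕ) + 1 = i <;> simp [h1, h2]
    omega

theorem sum_mutT_row {n : ℕ} (i : Fin n) : ∑ j, mutT n i j = 0 := by
  have hsucc : ∑ j : Fin n, (if (i : ℕ) + 1 = j then (1 : ℝ) else 0)
      = if (i : ℕ) + 1 < n then 1 else 0 := by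
    rw [Fin.sum_univ_eq_sum_range (fun j => if (i : ℕ) + 1 = j then (1 : ℝ) else 0),
      Finset.sum_ite_eq]
    simp
  have hpred : ∑ j : Fin n, (if (j : ℕ) + 1 = i then (1 : ℝ) else 0)
      = if 0 < (i : ℕ) then 1 else 0 := by
    have hshift : ∀ j : ℕ, (if j + 1 = i then (1 : ℝ) else 0)
        = if 0 < (i : ℕ) then (if (i : ℕ) - 1 = j then 1 else 0) else 0 := by
      intro j
      split_ifs <;> first | rfl | omega
    rw [Fin.sum_univ_eq_sum_range (fun j => if j + 1 = i then (1 : ℝ) else 0)]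
    simp only [hshift]
    split_ifs
    · simp only [Finset.sum_ite_eq, Finset.mem_range, if_pos (by omega : (i : ℕ) - 1 < n)]
    · simp
  simp only [mutT_apply, Finset.sum_sub_distrib, Finset.sum_add_distrib, hsucc, hpred,
    Finset.sum_ite_eq, Finset.mem_univ, if_true]
  ring

section Bmat

variable {n : ℕ} {m a : Fin n → ℝ} {s u ε : ℝ}

theorem Bmat_apply_self (i : Fin n) :
    Bmat n m a s u ε i i = monod (m i) (a i) s - u + ε * mutT n i i := by
  simp [Bmat]

theorem Bmat_apply_of_ne {i j : Fin n} (h : i ≠ j) : Bmat n m a s u ε i j = ε * mutT n i j := by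
  simp [Bmat, h]

theorem isHermitian_Bmat : (Bmat n m a s u ε).IsHermitian :=
  Matrix.isHermitian_iff_isSymm.2 <| Matrix.IsSymm.ext fun i j => by
    rcases eq_or_ne i j with rfl | h
    · rfl
    · rw [Bmat_apply_of_ne h, Bmat_apply_of_ne h.symm, 
      (isSymm_mutT n).apply]

theorem sum_Bmat_row (i : Fin n) : ∑ j, Bmat n m a s u ε i j = monod (m i) (a i) s - u := by
  simp [Bmat, Finset.sum_add_distrib, ← Finset.mul_sum, sum_mutT_row, Matrix.diagonal_apply,
    Matrix.one_apply]

theorem Bmat_nonneg_of_ne (hε : 0 ≤ ε) {i j : Fin n} (h : i ≠ j) : 0 ≤ Bmat n m a s u ε i j := by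
  rw [Bmat_apply_of_ne h]
  exact mul_nonneg hε (mutT_nonneg_of_ne h)

end Bmat

theorem stmt_9_general (n : ℕ) (hn : 1 ≤ n) (m a : Fin n → ℝ)
    (ε u : ℝ) (hε : 0 < ε) :
    max ((⨆ j : Fin n, monod (m j) (a j) 1) - u - 2 * ε)
        ((1 / (n : ℝ)) * (∑ j, monod (m j) (a j) 1) - u)
      ≤ maxEig (Bmat n m a 1 u ε) ∧
    maxEig (Bmat n m a 1 u ε) ≤ (⨆ j : Fin n, monod (m j) (a j) 1) - u := by
  have : NeZero n := ⟨by omega⟩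
  have hB : (Bmat n m a 1 u ε).IsHermitian := isHermitian_Bmat
  have hle_iSup : ∀ i, monod (m i) (a i) 1 ≤ ⨆ j, monod (m j) (a j) 1 :=
    le_ciSup (Set.finite_range _).bddAbove
  obtain ⟨k, hk⟩ := exists_eq_ciSup_of_finite (f := fun j => monod (m j) (a j) 1)
  refine ⟨max_le ?_ ?_, hB.maxEig_le_of_sum_row_le
    (fun _ _ => Bmat_nonneg_of_ne hε.le) fun i => ?_⟩
  · calc (⨆ j, monod (m j) (a j) 1) - u - 2 * ε ≤ Bmat n m a 1 u ε k k := by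
          rw [← hk, Bmat_apply_self]
          nlinarith [neg_two_le_mutT_self k]
      _ ≤ _ := hB.diag_le_maxEig k
  · calc (1 / (n : ℝ)) * (∑ j, monod (m j) (a j) 1) - u
          = (∑ i, ∑ j, Bmat n m a 1 u ε i j) / n := by
            simp only [sum_Bmat_row, Finset.sum_sub_distrib, Finset.sum_const, Finset.card_univ,
              Fintype.card_fin, nsmul_eq_mul]
            field_simp
      _ ≤ _ := hB.sum_div_card_le_maxEig
  · rw [sum_Bmat_row]
    linarith [hle_iSup i]

/-- bounds on `λ(B(1,u,ε))`:
`max(μ̂(1) - u - 2ε, μ̄(1) - u) ≤ λ(B(1,u,ε)) ≤ μ̂(1) - u`. -/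
theorem stmt_9 (n : ℕ) (hn : 1 ≤ n) (m a : Fin n → ℝ)
    (hm : ∀ i, 0 < m i) (ha : ∀ i, 0 < a i)
    (ε u : ℝ) (hε : 0 < ε) (hu : 0 < u) :
    max ((⨆ j : Fin n, monod (m j) (a j) 1) - u - 2 * ε)
        ((1 / (n : ℝ)) * (∑ j, monod (m j) (a j) 1) - u)
      ≤ maxEig (Bmat n m a 1 u ε) ∧
    maxEig (Bmat n m a 1 u ε) ≤ (⨆ j : Fin n, monod (m j) (a j) 1) - u :=
  stmt_9_general n hn m a ε u hε
end
end

section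
/- Suppose 0 < u < m := max_{1≤j≤n} μ_j(1) and there is a unique index i₀ with λ_{i₀}(u) = min_{1≤i≤n} λ_i(u) < +∞. Then there exist ε₀ > 0 and continuously differentiable maps ε ↦ x^ε ∈ ℝ^n and ε ↦ s^ε ∈ ℝ on [0, ε₀) such that for every ε ∈ (0, ε₀), (x^ε, s^ε) is the coexistence steady state of (S), and as ε ↓ 0: s^ε = λ_{i₀}(u) + ε σ + o(ε) and x^ε = x* + ε ξ + o(ε), where x* := (1 − λ_{i₀}(u)) e_{i₀} (with e_{i₀} the i₀-th canonical basis vector), σ := −T_{i₀,i₀} / μ'_{i₀}(λ_{i₀}(u)), ξ_j = 0 for j ∈ {1,…,n} \ {i₀−1, i₀, i₀+1}, ξ_j = (1 − λ_{i₀}(u)) / (u − μ_j(λ_{i₀}(u))) for j ∈ {i₀−1, i₀+1} ∩ {1,…,n}, and ξ_{i₀} = −ξ_{i₀−1} − ξ_{i₀+1} − σ (with the convention ξ_0 = ξ_{n+1} = 0). -/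
open Matrix Filter Set Topology Asymptotics

noncomputable section

/-!
Write the steady-state conditions as `F(ε, x, s) = (B(s,u,ε) x, ∑ x + s - 1) = 0`. At `ε = 0` the
point `(x*, λ)` with `λ = λ_{i₀}(u)` is a zero of `F`, and the partial derivative of `F` in `(x, s)`
there is invertible: `μ_j(λ) ≠ u` for `j ≠ i₀` and `μ'_{i₀}(λ) (1 - λ) ≠ 0`. The implicit function
theorem gives a `C¹` branch `ε ↦ (x^ε, s^ε)`, and differentiating `F(ε, x^ε, s^ε) = 0` at `ε = 0`
identifies its derivative as `(ξ, σ)`. For small `ε > 0` we still have `μ_j(s^ε) < u` for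
`j ≠ i₀` and `x^ε_{i₀} > 0`, and a discrete minimum principle for the path-graph Laplacian `T`
spreads the positivity of `x^ε_{i₀}` to all coordinates.
-/

section Monod

variable {m a u s : ℝ}

lemma monod_hasDerivAt (h : a + s ≠ 0) : HasDerivAt (monod m a) (m * a / (a + s) ^ 2) s := by
  have h' : HasDerivAt (fun t => m * t / (a + t)) ((m * 1 * (a + s) - m * s * 1) / (a + s) ^ 2) s :=
    ((hasDerivAt_id' s).const_mul m).div ((hasDerivAt_id' s).const_add a) h
  exact h'.congr_deriv (by ring)

lemma monod_strictMonoOn (hm : 0 < m) (ha : 0 < a) : StrictMonoOn (monod m a) (Ici 0) := by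
  intro s hs t ht hst
  simp only [mem_Ici] at hs ht
  rw [monod, monod, div_lt_div_iff₀ (by linarith) (by linarith)]
  nlinarith [mul_pos hm ha]

lemma lt_of_lt_monod (ha : 0 < a) (hu : 0 < u) (hs : 0 ≤ s) (h : u < monod m a s) : u < m := by
  rw [monod, lt_div_iff₀ (by linarith)] at h
  nlinarith

lemma monod_lt_iff (ha : 0 < a) (hum : u < m) (hs : 0 ≤ s) :
    monod m a s < u ↔ s < a * u / (m - u) := by
  rw [monod, div_lt_iff₀ (by linarith), lt_div_iff₀ (by linarith)]
  constructor <;> intro h <;> linarith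

lemma lt_monod_iff (ha : 0 < a) (hum : u < m) (hs : 0 ≤ s) :
    u < monod m a s ↔ a * u / (m - u) < s := by
  rw [monod, lt_div_iff₀ (by linarith), div_lt_iff₀ (by linarith)]
  constructor <;> intro h <;> linarith

lemma monod_breakEven (ha : 0 < a) (hu : 0 < u) (hum : u < m) :
    monod m a (a * u / (m - u)) = u := by
  have : m - u ≠ 0 := by linarith
  rw [monod, div_eq_iff (by positivity)]
  field_simp
  ring

end Monod

lemma breakEven_spec {n : ℕ} {m a : Fin n → ℝ} {u : ℝ} {i₀ : Fin n} (hm : ∀ i, 0 < m i)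
    (ha : ∀ i, 0 < a i) (hu : 0 < u) (hi₀ : u < monod (m i₀) (a i₀) 1)
    (hmin : ∀ j, j ≠ i₀ → u < monod (m j) (a j) 1 →
      a i₀ * u / (m i₀ - u) < a j * u / (m j - u)) :
    0 < a i₀ * u / (m i₀ - u) ∧ a i₀ * u / (m i₀ - u) < 1 ∧
      monod (m i₀) (a i₀) (a i₀ * u / (m i₀ - u)) = u ∧
      ∀ j ≠ i₀, monod (m j) (a j) (a i₀ * u / (m i₀ - u)) < u := by
  have hum := lt_of_lt_monod (ha i₀) hu zero_le_one hi₀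
  have hpos : 0 < a i₀ * u / (m i₀ - u) := div_pos (mul_pos (ha i₀) hu) (by linarith)
  have hlt : a i₀ * u / (m i₀ - u) < 1 := (lt_monod_iff (ha i₀) hum zero_le_one).1 hi₀
  refine ⟨hpos, hlt, monod_breakEven (ha i₀) hu hum, fun j hj => ?_⟩
  by_cases hj₁ : u < monod (m j) (a j) 1
  · exact (monod_lt_iff (ha j) (lt_of_lt_monod (ha j) hu zero_le_one hj₁) hpos.le).2
      (hmin j hj hj₁)
  · exact ((monod_strictMonoOn (hm j) (ha j)) (mem_Ici.2 hpos.le) (mem_Ici.2 zero_le_one)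
      hlt).trans_le (not_lt.1 hj₁)

def nbrs (n : ℕ) (k : Fin n) : Finset (Fin n) :=
  Finset.univ.filter fun j => (j : ℕ) + 1 = k ∨ (k : ℕ) + 1 = j

section Neighbours

variable {n : ℕ}

lemma mem_nbrs {j k : Fin n} : j ∈ nbrs n k ↔ (j : ℕ) + 1 = k ∨ (k : ℕ) + 1 = j := by
  simp [nbrs]

lemma mem_nbrs_iff_adj {j k : Fin n} : j ∈ nbrs n k ↔ (SimpleGraph.pathGraph n).Adj k j := by
  rw [mem_nbrs, SimpleGraph.pathGraph_adj, or_comm]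

lemma self_notMem_nbrs (k : Fin n) : k ∉ nbrs n k := by simp [mem_nbrs]

lemma card_nbrs (k : Fin n) :
    (nbrs n k).card = (if 0 < (k : ℕ) then 1 else 0) + (if (k : ℕ) + 1 < n then 1 else 0) := by
  rw [nbrs, Finset.filter_or, Finset.card_union_of_disjoint
    (Finset.disjoint_filter.2 fun j _ h₁ h₂ => by omega)]
  congr 1
  · split_ifs with h
    · exact Finset.card_eq_one.2 ⟨⟨k - 1, by omega⟩, by ext j; simp [Fin.ext_iff]; omega⟩
    · exact Finset.card_eq_zero.2 (by ext j; simp; omega)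
  · split_ifs with h
    · exact Finset.card_eq_one.2 ⟨⟨k + 1, h⟩, by ext j; simp [Fin.ext_iff]; omega⟩
    · exact Finset.card_eq_zero.2 (by ext j; simp; omega)

lemma mutT_apply_of_mem_nbrs {i j : Fin n} (h : i ∈ nbrs n j) : mutT n i j = 1 :=
  if_pos (mem_nbrs.1 h)

lemma mutT_apply_of_notMem_nbrs {i j : Fin n} (hij : i ≠ j) (h : i ∉ nbrs n j) :
    mutT n i j = 0 := by
  rw [mem_nbrs] at h
  simp [mutT, h, hij]

lemma mutT_mulVec_apply (x : Fin n → ℝ) (k : Fin n) :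
    (mutT n *ᵥ x) k = ∑ j ∈ nbrs n k, (x j - x k) := by
  have hT : ∀ j, mutT n k j =
      (if j ∈ nbrs n k then 1 else 0) - if j = k then ((nbrs n k).card : ℝ) else 0 := by
    intro j
    rw [card_nbrs]
    by_cases hjk : j = k
    · subst hjk; simp [mutT, nbrs]
    · simp only [mutT, of_apply, nbrs, Finset.mem_filter, Finset.mem_univ, true_and, hjk,
        Ne.symm hjk, if_false, sub_zero]
      split_ifs <;> simp_all
  simp only [mulVec, dotProduct, hT, sub_mul, Finset.sum_sub_distrib, ite_mul, one_mul, zero_mul,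
    Finset.sum_ite_mem, Finset.univ_inter, Finset.sum_ite_eq', Finset.mem_univ, if_true,
    Finset.sum_const, nsmul_eq_mul]

end Neighbours

theorem SimpleGraph.Reachable.propagate {V : Type*} {G : SimpleGraph V} {P : V → Prop} {v w : V}
    (hvw : G.Reachable v w) (hP : ∀ j ≠ w, P j → ∀ k, G.Adj j k → P k) (hv : P v) : P w := by
  obtain ⟨p⟩ := hvw
  induction p with
  | nil => exact hv
  | @cons j k l hadj _ ih =>
    by_cases hj : j = l
    · exact hj ▸ hv
    · exact ih hP (hP j hj hv k hadj)

lemma pos_of_forall_ne_mul_add_mutT_mulVec_eq_zero {n : ℕ} {ε : ℝ} {d x : Fin n → ℝ}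
    {i₀ : Fin n} (hε : 0 < ε) (hd : ∀ j ≠ i₀, d j < 0)
    (hx : ∀ j ≠ i₀, d j * x j + ε * (mutT n *ᵥ x) j = 0) (h₀ : 0 < x i₀) (j : Fin n) :
    0 < x j := by
  have hnonneg : ∀ j, 0 ≤ x j := by
    obtain ⟨k, -, hk⟩ := Finset.univ.exists_min_image x ⟨i₀, Finset.mem_univ _⟩
    refine fun j => le_trans ?_ (hk j (Finset.mem_univ _))
    by_contra! hneg
    have hki : k ≠ i₀ := by rintro rfl; linarith
    have hTx : 0 ≤ (mutT n *ᵥ x) k := by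
      rw [mutT_mulVec_apply]
      exact Finset.sum_nonneg fun l _ => sub_nonneg.2 (hk l (Finset.mem_univ _))
    nlinarith [hx k hki, hd k hki, mul_nonneg hε.le hTx]
  have hzero : ∀ j ≠ i₀, x j = 0 → ∀ k, (SimpleGraph.pathGraph n).Adj j k → x k = 0 := by
    intro j hj hxj k hjk
    have hsum := hx j hj
    rw [mutT_mulVec_apply, hxj] at hsum
    simp only [mul_zero, sub_zero, zero_add, mul_eq_zero, hε.ne', false_or] at hsum
    exact (Finset.sum_eq_zero_iff_of_nonneg fun l _ => hnonneg l).1 hsum k (mem_nbrs_iff_adj.2 hjk)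
  refine (hnonneg j).lt_of_ne fun hj => h₀.ne' ?_
  exact (SimpleGraph.pathGraph_preconnected n j i₀).propagate hzero hj.symm

theorem exists_implicit_curve {E : Type*} [NormedAddCommGroup E] [NormedSpace ℝ E]
    [FiniteDimensional ℝ E] {f : ℝ × E → E} {p : ℝ × E} (hf : ContDiffAt ℝ 1 f p)
    (hinj : Function.Injective (fderiv ℝ f p ∘L .inr ℝ ℝ E)) {w : E}
    (hw : fderiv ℝ f p (1, w) = 0) :
    ∃ ψ : ℝ → E, ψ p.1 = p.2 ∧ HasDerivAt ψ w p.1 ∧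
      ∀ᶠ ε in 𝓝 p.1, ContDiffAt ℝ 1 ψ ε ∧ f (ε, ψ ε) = f p := by
  set L := fderiv ℝ f p ∘L .inr ℝ ℝ E
  have hL : L.IsInvertible :=
    ⟨(LinearEquiv.ofInjectiveEndo L.toLinearMap hinj).toContinuousLinearEquiv, rfl⟩
  refine ⟨hf.implicitFunction one_ne_zero hL, hf.implicitFunction_apply_self one_ne_zero hL, ?_,
    ((hf.contDiffAt_implicitFunction one_ne_zero hL).eventually (by simp)).and
      (hf.eventually_apply_implicitFunction one_ne_zero hL)⟩
  convert (hf.hasStrictFDerivAt_implicitFunction one_ne_zero hL).hasFDerivAt.hasDerivAt using 1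
  have hsplit : fderiv ℝ f p (1, 0) = L (-w) := by
    rw [show ((1 : ℝ), (0 : E)) = (1, w) + (0, -w) by simp, map_add, hw, zero_add]
    rfl
  change w = -L.inverse (fderiv ℝ f p (1, 0))
  rw [(hL.inverse_apply_eq (x := -w)).2 hsplit, neg_neg]

lemma isLittleO_sub_linear_of_hasDerivAt {f : ℝ → ℝ} {f' : ℝ} (h : HasDerivAt f f' 0) :
    (fun ε => f ε - (f 0 + ε * f')) =o[𝓝[>] (0 : ℝ)] fun ε => ε := by
  have := (hasDerivAt_iff_isLittleO.1 h).mono (nhdsWithin_le_nhds (s := Ioi 0))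
  simpa only [sub_zero, smul_eq_mul, sub_add_eq_sub_sub] using this

lemma Bmat_mulVec_apply {n : ℕ} (m a : Fin n → ℝ) (s u ε : ℝ) (x : Fin n → ℝ) (i : Fin n) :
    (Bmat n m a s u ε *ᵥ x) i = (monod (m i) (a i) s - u) * x i + ε * (mutT n *ᵥ x) i := by
  simp only [Bmat, add_mulVec, sub_mulVec, smul_mulVec, one_mulVec, mulVec_diagonal, Pi.add_apply,
    Pi.sub_apply, Pi.smul_apply, smul_eq_mul]
  ring

def steadyMap (n : ℕ) (m a : Fin n → ℝ) (u : ℝ) (p : ℝ × (Fin n → ℝ) × ℝ) : (Fin n → ℝ) × ℝ :=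
  (Bmat n m a p.2.2 u p.1 *ᵥ p.2.1, ∑ j, p.2.1 j + p.2.2 - 1)

def steadyMapDeriv (n : ℕ) (m a : Fin n → ℝ) (u : ℝ) (p v : ℝ × (Fin n → ℝ) × ℝ) :
    (Fin n → ℝ) × ℝ :=
  (fun i => m i * a i / (a i + p.2.2) ^ 2 * v.2.2 * p.2.1 i
      + (monod (m i) (a i) p.2.2 - u) * v.2.1 i + v.1 * (mutT n *ᵥ p.2.1) i
      + p.1 * (mutT n *ᵥ v.2.1) i,
    ∑ j, v.2.1 j + v.2.2)

section SteadyMap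

variable {n : ℕ} {m a : Fin n → ℝ} {u : ℝ}

lemma steadyMap_eq_zero_iff {ε s : ℝ} {x : Fin n → ℝ} :
    steadyMap n m a u (ε, x, s) = 0 ↔ Bmat n m a s u ε *ᵥ x = 0 ∧ ∑ j, x j + s = 1 := by
  simp [steadyMap, Prod.ext_iff, sub_eq_zero]

lemma contDiffAt_steadyMap {p : ℝ × (Fin n → ℝ) × ℝ} (hden : ∀ i, a i + p.2.2 ≠ 0) :
    ContDiffAt ℝ 1 (steadyMap n m a u) p := by
  have hT : ContDiff ℝ 1 fun x : Fin n → ℝ => mutT n *ᵥ x :=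
    (mutT n).mulVecLin.toContinuousLinearMap.contDiff
  refine ContDiffAt.prodMk (contDiffAt_pi.2 fun i => ?_) (by fun_prop)
  simp only [Bmat_mulVec_apply, monod]
  have := hden i
  fun_prop (disch := assumption)

lemma hasLineDerivAt_steadyMap (p v : ℝ × (Fin n → ℝ) × ℝ) (hden : ∀ i, a i + p.2.2 ≠ 0) :
    HasLineDerivAt ℝ (steadyMap n m a u) (steadyMapDeriv n m a u p v) p v := by
  obtain ⟨ε, x, s⟩ := p
  obtain ⟨τ, ξ, σ⟩ := v
  have hline : ∀ {c d : ℝ}, HasDerivAt (fun t : ℝ => c + t * d) d 0 := fun {c d} => by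
    simpa using ((hasDerivAt_id' (0 : ℝ)).mul_const d).const_add c
  unfold HasLineDerivAt steadyMap
  simp only [Prod.smul_mk, Prod.mk_add_mk, smul_eq_mul]
  refine HasDerivAt.prodMk (hasDerivAt_pi.2 fun i => ?_) ?_
  · simp only [Bmat_mulVec_apply, mulVec_add, mulVec_smul, Pi.add_apply, Pi.smul_apply,
      smul_eq_mul]
    have hμ : HasDerivAt (fun t => monod (m i) (a i) (s + t * σ))
        (m i * a i / (a i + s) ^ 2 * σ) 0 :=
      (monod_hasDerivAt (by simpa using hden i)).comp_of_eq 0 hline (by simp)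
    have hx : HasDerivAt (fun t => x i + t * ξ i) (ξ i) 0 := hline
    have hε : HasDerivAt (fun t => ε + t * τ) τ 0 := hline
    have hT : HasDerivAt (fun t => (mutT n *ᵥ x) i + t * (mutT n *ᵥ ξ) i) ((mutT n *ᵥ ξ) i) 0 :=
      hline
    convert ((hμ.sub_const u).mul hx).add (hε.mul hT) using 1
    · rfl
    · simp only [zero_mul, add_zero]
      ring
  · simp only [Pi.add_apply, Pi.smul_apply, smul_eq_mul, Finset.sum_add_distrib, ← Finset.mul_sum]
    exact (hline.add hline).sub_const 1

lemma fderiv_steadyMap_apply (p v : ℝ × (Fin n → ℝ) × ℝ) (hden : ∀ i, a i + p.2.2 ≠ 0) :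
    fderiv ℝ (steadyMap n m a u) p v = steadyMapDeriv n m a u p v :=
  (((contDiffAt_steadyMap hden).differentiableAt one_ne_zero).hasFDerivAt.hasLineDerivAt v).unique
    (hasLineDerivAt_steadyMap p v hden)

lemma pos_of_steadyMap_eq_zero {ε s : ℝ} {x : Fin n → ℝ} {i₀ : Fin n} (hε : 0 < ε)
    (hF : steadyMap n m a u (ε, x, s) = 0) (hx : 0 < x i₀)
    (hlt : ∀ j ≠ i₀, monod (m j) (a j) s < u) (j : Fin n) : 0 < x j := by
  refine pos_of_forall_ne_mul_add_mutT_mulVec_eq_zero hε (d := fun j => monod (m j) (a j) s - u)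
    (fun j hj => sub_neg.2 (hlt j hj)) (fun j _ => ?_) hx j
  rw [← Bmat_mulVec_apply, (steadyMap_eq_zero_iff.1 hF).1, Pi.zero_apply]

end SteadyMap

def sCorrection (n : ℕ) (m a : Fin n → ℝ) (ℓ : ℝ) (i₀ : Fin n) : ℝ :=
  -mutT n i₀ i₀ / (m i₀ * a i₀ / (a i₀ + ℓ) ^ 2)

def xCorrection (n : ℕ) (m a : Fin n → ℝ) (u ℓ : ℝ) (i₀ : Fin n) : Fin n → ℝ :=
  Pi.single i₀ (-sCorrection n m a ℓ i₀ - ∑ k ∈ nbrs n i₀, (1 - ℓ) / (u - monod (m k) (a k) ℓ))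
    + fun j => if j ∈ nbrs n i₀ then (1 - ℓ) / (u - monod (m j) (a j) ℓ) else 0

section BaseState

variable {n : ℕ} {m a : Fin n → ℝ} {u ℓ : ℝ} {i₀ : Fin n}

lemma xCorrection_apply_of_mem_nbrs {j : Fin n} (h : j ∈ nbrs n i₀) :
    xCorrection n m a u ℓ i₀ j = (1 - ℓ) / (u - monod (m j) (a j) ℓ) := by
  have : j ≠ i₀ := by rintro rfl; exact self_notMem_nbrs j h
  simp [xCorrection, this, h]

lemma xCorrection_apply_of_notMem_nbrs {j : Fin n} (hj : j ≠ i₀) (h : j ∉ nbrs n i₀) :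
    xCorrection n m a u ℓ i₀ j = 0 := by
  simp [xCorrection, hj, h]

lemma xCorrection_apply_self :
    xCorrection n m a u ℓ i₀ i₀ =
      -sCorrection n m a ℓ i₀ - ∑ k ∈ nbrs n i₀, xCorrection n m a u ℓ i₀ k := by
  rw [Finset.sum_congr rfl fun k hk => xCorrection_apply_of_mem_nbrs hk]
  simp [xCorrection, self_notMem_nbrs]

lemma steadyMap_base (h₀ : monod (m i₀) (a i₀) ℓ = u) :
    steadyMap n m a u (0, Pi.single i₀ (1 - ℓ), ℓ) = 0 := by
  refine steadyMap_eq_zero_iff.2 ⟨funext fun i => ?_, by simp⟩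
  rw [Bmat_mulVec_apply]
  rcases eq_or_ne i i₀ with rfl | hi
  · simp [h₀]
  · simp [hi]

lemma fderiv_steadyMap_base_apply (hden : ∀ i, a i + ℓ ≠ 0) (v : ℝ × (Fin n → ℝ) × ℝ) :
    fderiv ℝ (steadyMap n m a u) (0, Pi.single i₀ (1 - ℓ), ℓ) v =
      (fun i => (monod (m i) (a i) ℓ - u) * v.2.1 i + if i = i₀ then
          (m i₀ * a i₀ / (a i₀ + ℓ) ^ 2 * v.2.2 + v.1 * mutT n i₀ i₀) * (1 - ℓ)
        else v.1 * mutT n i i₀ * (1 - ℓ),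
        ∑ j, v.2.1 j + v.2.2) := by
  rw [fderiv_steadyMap_apply _ _ hden]
  refine Prod.ext (funext fun i => ?_) rfl
  rcases eq_or_ne i i₀ with rfl | hi
  · simp only [steadyMapDeriv, mulVec, dotProduct_single, Pi.single_eq_same, zero_mul, add_zero,
      if_pos]
    ring
  · simp only [steadyMapDeriv, mulVec, dotProduct_single, Pi.single_eq_of_ne hi, mul_zero,
      zero_mul, add_zero, if_neg hi]
    ring

lemma injective_fderiv_steadyMap_base_inr (hden : ∀ i, a i + ℓ ≠ 0)
    (h₀ : monod (m i₀) (a i₀) ℓ = u) (hne : ∀ j ≠ i₀, monod (m j) (a j) ℓ ≠ u) (hℓ : ℓ ≠ 1)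
    (hμ' : m i₀ * a i₀ / (a i₀ + ℓ) ^ 2 ≠ 0) :
    Function.Injective
      (fderiv ℝ (steadyMap n m a u) (0, Pi.single i₀ (1 - ℓ), ℓ) ∘L .inr ℝ ℝ _) := by
  rw [injective_iff_map_eq_zero]
  rintro ⟨ξ, σ⟩ hv
  simp only [ContinuousLinearMap.comp_apply, ContinuousLinearMap.inr_apply,
    fderiv_steadyMap_base_apply hden, zero_mul, add_zero, Prod.ext_iff, funext_iff,
    Prod.fst_zero, Prod.snd_zero, Pi.zero_apply] at hv
  obtain ⟨hx, hs⟩ := hv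
  have hσ : σ = 0 := by simpa [h₀, hμ', sub_eq_zero, Ne.symm hℓ] using hx i₀
  have hξ : ∀ j ≠ i₀, ξ j = 0 := fun j hj => by
    simpa [hj, sub_eq_zero, hne j hj] using hx j
  have hξ₀ : ξ i₀ = 0 := by
    rwa [Finset.sum_eq_single i₀ (fun j _ hj => hξ j hj) (by simp), hσ, add_zero] at hs
  simp only [Prod.mk_eq_zero, hσ, and_true]
  funext j
  rcases eq_or_ne j i₀ with rfl | hj
  exacts [hξ₀, hξ j hj]

lemma fderiv_steadyMap_base_corrections (hden : ∀ i, a i + ℓ ≠ 0)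
    (h₀ : monod (m i₀) (a i₀) ℓ = u) (hne : ∀ j ≠ i₀, monod (m j) (a j) ℓ ≠ u)
    (hμ' : m i₀ * a i₀ / (a i₀ + ℓ) ^ 2 ≠ 0) :
    fderiv ℝ (steadyMap n m a u) (0, Pi.single i₀ (1 - ℓ), ℓ)
      (1, xCorrection n m a u ℓ i₀, sCorrection n m a ℓ i₀) = 0 := by
  rw [fderiv_steadyMap_base_apply hden]
  refine Prod.ext (funext fun i => ?_) ?_
  · simp only [one_mul, Prod.fst_zero, Pi.zero_apply]
    rcases eq_or_ne i i₀ with rfl | hi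
    · simp only [h₀, sub_self, zero_mul, zero_add, if_pos, sCorrection, mul_div_cancel₀ _ hμ']
      ring
    by_cases hnb : i ∈ nbrs n i₀
    · have : u - monod (m i) (a i) ℓ ≠ 0 := sub_ne_zero.2 (hne i hi).symm
      rw [xCorrection_apply_of_mem_nbrs hnb, if_neg hi, mutT_apply_of_mem_nbrs hnb]
      field_simp
      ring
    · simp [xCorrection_apply_of_notMem_nbrs hi hnb, hi, mutT_apply_of_notMem_nbrs hi hnb]
  · simp [xCorrection, Finset.sum_add_distrib, Finset.sum_ite_mem]

lemma eventually_nhds_base (hden : ∀ i, a i + ℓ ≠ 0) (hℓ₀ : 0 < ℓ) (hℓ₁ : ℓ < 1)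
    (hlt : ∀ j ≠ i₀, monod (m j) (a j) ℓ < u) :
    ∀ᶠ q : (Fin n → ℝ) × ℝ in 𝓝 (Pi.single i₀ (1 - ℓ), ℓ),
      q.2 ∈ Ioo 0 1 ∧ 0 < q.1 i₀ ∧ ∀ j ≠ i₀, monod (m j) (a j) q.2 < u := by
  have h₂ : Tendsto (fun q : (Fin n → ℝ) × ℝ => q.2) (𝓝 (Pi.single i₀ (1 - ℓ), ℓ)) (𝓝 ℓ) :=
    continuous_snd.continuousAt
  have h₁ : Tendsto (fun q : (Fin n → ℝ) × ℝ => q.1 i₀) (𝓝 (Pi.single i₀ (1 - ℓ), ℓ))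
      (𝓝 (1 - ℓ)) := by
    simpa [Function.comp_def] using
      ((continuous_apply i₀).comp continuous_fst).tendsto ((Pi.single i₀ (1 - ℓ) : Fin n → ℝ), ℓ)
  refine (h₂.eventually (Ioo_mem_nhds hℓ₀ hℓ₁)).and ((h₁.eventually (lt_mem_nhds (by linarith))).and
    (eventually_all.2 fun j => ?_))
  by_cases hj : j = i₀
  · exact Eventually.of_forall fun _ h => absurd hj h
  · exact (((monod_hasDerivAt (hden j)).continuousAt.tendsto.comp h₂).eventually
      (gt_mem_nhds (hlt j hj))).mono fun _ h _ => h

end BaseState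

/-- In the statement, `a i₀ * u / (m i₀ - u)` is `λ_{i₀}(u)` and
`m i₀ * a i₀ / (a i₀ + s) ^ 2` is `μ'_{i₀}(s)`. -/
theorem stmt_14_general (n : ℕ) (m a : Fin n → ℝ)
    (hm : ∀ i, 0 < m i) (ha : ∀ i, 0 < a i)
    (u : ℝ) (hu : 0 < u)
    (i₀ : Fin n) (hi₀ : u < monod (m i₀) (a i₀) 1)
    (hmin : ∀ j, j ≠ i₀ → u < monod (m j) (a j) 1 →
      a i₀ * u / (m i₀ - u) < a j * u / (m j - u)) :
    ∃ ε₀ : ℝ, 0 < ε₀ ∧ ∃ X : ℝ → Fin n → ℝ, ∃ S : ℝ → ℝ,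
      ContDiffOn ℝ 1 X (Set.Ico 0 ε₀) ∧ ContDiffOn ℝ 1 S (Set.Ico 0 ε₀) ∧
      (∀ ε ∈ Set.Ioo (0 : ℝ) ε₀,
        (∀ i, 0 < X ε i) ∧ S ε ∈ Set.Ioo (0 : ℝ) 1 ∧
        (Bmat n m a (S ε) u ε).mulVec (X ε) = 0 ∧ (∑ j, X ε j) + S ε = 1) ∧
      ∃ σ : ℝ, ∃ ξ : Fin n → ℝ,
        σ = -(mutT n i₀ i₀)
              / (m i₀ * a i₀ / (a i₀ + a i₀ * u / (m i₀ - u)) ^ 2) ∧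
        (∀ j : Fin n, ((j : ℕ) + 1 = (i₀ : ℕ) ∨ (i₀ : ℕ) + 1 = (j : ℕ)) →
          ξ j = (1 - a i₀ * u / (m i₀ - u))
                  / (u - monod (m j) (a j) (a i₀ * u / (m i₀ - u)))) ∧
        (∀ j : Fin n, j ≠ i₀ → ¬((j : ℕ) + 1 = (i₀ : ℕ) ∨ (i₀ : ℕ) + 1 = (j : ℕ)) →
          ξ j = 0) ∧
        ξ i₀ = -σ - ∑ j ∈ Finset.univ.filter
            (fun j : Fin n => (j : ℕ) + 1 = (i₀ : ℕ) ∨ (i₀ : ℕ) + 1 = (j : ℕ)), ξ j ∧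
        (fun ε => S ε - (a i₀ * u / (m i₀ - u) + ε * σ)) =o[𝓝[>] (0 : ℝ)] (fun ε => ε) ∧
        (∀ j : Fin n,
          (fun ε => X ε j - ((if j = i₀ then 1 - a i₀ * u / (m i₀ - u) else 0) + ε * ξ j))
            =o[𝓝[>] (0 : ℝ)] (fun ε => ε)) := by
  obtain ⟨hℓ₀, hℓ₁, h₀, hlt⟩ := breakEven_spec hm ha hu hi₀ hmin
  set ℓ := a i₀ * u / (m i₀ - u)
  have hden : ∀ i, a i + ℓ ≠ 0 := fun i => (add_pos (ha i) hℓ₀).ne'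
  have hμ' : m i₀ * a i₀ / (a i₀ + ℓ) ^ 2 ≠ 0 := by
    have := hm i₀
    have := ha i₀
    positivity
  have hne : ∀ j ≠ i₀, monod (m j) (a j) ℓ ≠ u := fun j hj => (hlt j hj).ne
  obtain ⟨ψ, hψ₀, hψ', hψ⟩ := exists_implicit_curve (contDiffAt_steadyMap (u := u) hden)
    (injective_fderiv_steadyMap_base_inr hden h₀ hne hℓ₁.ne hμ')
    (fderiv_steadyMap_base_corrections hden h₀ hne hμ')
  dsimp only at hψ₀ hψ' hψ
  rw [steadyMap_base h₀] at hψ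
  have hnear := hψ'.continuousAt.eventually (hψ₀ ▸ eventually_nhds_base hden hℓ₀ hℓ₁ hlt)
  obtain ⟨ε₀, hε₀, hball⟩ := Metric.eventually_nhds_iff.1 (hψ.and hnear)
  have hclose : ∀ ε ∈ Ico 0 ε₀, dist ε 0 < ε₀ := fun ε hε => by
    rw [Real.dist_eq, sub_zero, abs_of_nonneg hε.1]
    exact hε.2
  refine ⟨ε₀, hε₀, fun ε => (ψ ε).1, fun ε => (ψ ε).2,
    fun ε hε => (hball (hclose ε hε)).1.1.fst.contDiffWithinAt,
    fun ε hε => (hball (hclose ε hε)).1.1.snd.contDiffWithinAt, fun ε hε => ?_,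
    sCorrection n m a ℓ i₀, xCorrection n m a u ℓ i₀, rfl,
    fun j hj => xCorrection_apply_of_mem_nbrs (mem_nbrs.2 hj),
    fun j hj hnb => xCorrection_apply_of_notMem_nbrs hj (mt mem_nbrs.1 hnb),
    xCorrection_apply_self, ?_, fun j => ?_⟩
  · obtain ⟨⟨-, hF⟩, hS, hX, hltε⟩ := hball (hclose ε ⟨hε.1.le, hε.2⟩)
    exact ⟨pos_of_steadyMap_eq_zero hε.1 hF hX hltε, hS, steadyMap_eq_zero_iff.1 hF⟩
  · simpa [hψ₀] using isLittleO_sub_linear_of_hasDerivAt hψ'.snd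
  · simpa [hψ₀, Pi.single_apply] using
      isLittleO_sub_linear_of_hasDerivAt (hasDerivAt_pi.1 hψ'.fst j)

/-- first-order expansion of the coexistence steady state as `ε ↓ 0`.
Here `λ_{i₀}(u) = a_{i₀} u / (m_{i₀} - u)` is the break-even concentration of the winning
species `i₀`, `μ'_{i₀}(s) = m_{i₀} a_{i₀} / (a_{i₀} + s)²`, and `x* = (1 - λ_{i₀}(u)) e_{i₀}`. -/
theorem stmt_14 (n : ℕ) (hn : 1 ≤ n) (m a : Fin n → ℝ)
    (hm : ∀ i, 0 < m i) (ha : ∀ i, 0 < a i)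
    (hdist : ∀ i j, i ≠ j → (m i, a i) ≠ (m j, a j))
    (u : ℝ) (hu : 0 < u) (hum : u < ⨆ j : Fin n, monod (m j) (a j) 1)
    (i₀ : Fin n) (hi₀ : u < monod (m i₀) (a i₀) 1)
    (hmin : ∀ j, j ≠ i₀ → u < monod (m j) (a j) 1 →
      a i₀ * u / (m i₀ - u) < a j * u / (m j - u)) :
    ∃ ε₀ : ℝ, 0 < ε₀ ∧ ∃ X : ℝ → Fin n → ℝ, ∃ S : ℝ → ℝ,
      ContDiffOn ℝ 1 X (Set.Ico 0 ε₀) ∧ ContDiffOn ℝ 1 S (Set.Ico 0 ε₀) ∧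
      (∀ ε ∈ Set.Ioo (0 : ℝ) ε₀,
        (∀ i, 0 < X ε i) ∧ S ε ∈ Set.Ioo (0 : ℝ) 1 ∧
        (Bmat n m a (S ε) u ε).mulVec (X ε) = 0 ∧ (∑ j, X ε j) + S ε = 1) ∧
      ∃ σ : ℝ, ∃ ξ : Fin n → ℝ,
        σ = -(mutT n i₀ i₀)
              / (m i₀ * a i₀ / (a i₀ + a i₀ * u / (m i₀ - u)) ^ 2) ∧
        (∀ j : Fin n, ((j : ℕ) + 1 = (i₀ : ℕ) ∨ (i₀ : ℕ) + 1 = (j : ℕ)) →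
          ξ j = (1 - a i₀ * u / (m i₀ - u))
                  / (u - monod (m j) (a j) (a i₀ * u / (m i₀ - u)))) ∧
        (∀ j : Fin n, j ≠ i₀ → ¬((j : ℕ) + 1 = (i₀ : ℕ) ∨ (i₀ : ℕ) + 1 = (j : ℕ)) →
          ξ j = 0) ∧
        ξ i₀ = -σ - ∑ j ∈ Finset.univ.filter
            (fun j : Fin n => (j : ℕ) + 1 = (i₀ : ℕ) ∨ (i₀ : ℕ) + 1 = (j : ℕ)), ξ j ∧
        (fun ε => S ε - (a i₀ * u / (m i₀ - u) + ε * σ)) =o[𝓝[>] (0 : ℝ)] (fun ε => ε) ∧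
        (∀ j : Fin n,
          (fun ε => X ε j - ((if j = i₀ then 1 - a i₀ * u / (m i₀ - u) else 0) + ε * ξ j))
            =o[𝓝[>] (0 : ℝ)] (fun ε => ε)) :=
  stmt_14_general n m a hm ha u hu i₀ hi₀ hmin
end
end

section
/- Let 0 < u < μ̄(1) where μ̄(s) := (1/n) Σ_{j=1}^n μ_j(s). For each ε > 0 let (x^{ε,u}, s^{ε,u}) denote the coexistence steady state of (S) (which exists since λ(B(1,u,ε)) ≥ μ̄(1) − u > 0). Then as ε → +∞, s^{ε,u} → μ̄^{-1}(u) and x^{ε,u} → ((1 − μ̄^{-1}(u))/n) · (1,…,1), where μ̄^{-1}(u) is the unique s ≥ 0 with μ̄(s) = u. -/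
/-! The mutation matrix `T` is minus the Laplacian `L` of the path graph, so at a steady state
`ε L x = r x`, with growth rates `r i = μ_i(s) - u` bounded independently of `ε`. Pairing with
`x` bounds the Dirichlet energy: `ε ∑_{i ∼ j} (x i - x j)² ≤ 2 max |r| (∑ x)²`, so along paths all
`x i` agree up to `O(ε^{-1/2}) · (1 - s)`. Pairing with the constant vector gives `∑ r i x i = 0`;
with the `x i` nearly equal this forces `∑ μ_i(s) - n u = O(ε^{-1/2})`. As `μ̄` is strictly
increasing, `s → μ̄⁻¹(u)`, and then every `x i` tends to the mean `(1 - μ̄⁻¹(u)) / n`. -/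

open Matrix Filter Set Topology Asymptotics

noncomputable section

namespace SimpleGraph

variable {V : Type*} {G : SimpleGraph V}

theorem Walk.abs_sub_le_length_mul {x : V → ℝ} {B : ℝ}
    (hB : ∀ a b, G.Adj a b → |x a - x b| ≤ B) {u v : V} (p : G.Walk u v) :
    |x u - x v| ≤ p.length * B := by
  induction p with
  | nil => simp
  | @cons u w v h _ ih =>
    rw [Walk.length_cons, Nat.cast_succ]
    linarith [abs_sub_le (x u) (x w) (x v), hB _ _ h]

theorem Preconnected.abs_sub_le_card_mul [Fintype V] (hG : G.Preconnected) {x : V → ℝ} {B : ℝ}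
    (hB0 : 0 ≤ B) (hB : ∀ a b, G.Adj a b → |x a - x b| ≤ B) (u v : V) :
    |x u - x v| ≤ Fintype.card V * B := by
  obtain ⟨p, hp⟩ := hG.exists_isPath u v
  calc |x u - x v| ≤ p.length * B := p.abs_sub_le_length_mul hB
    _ ≤ Fintype.card V * B := by gcongr; exact hp.length_lt.le

variable [Fintype V] [DecidableEq V] [DecidableRel G.Adj]

theorem sum_lapMatrix_mulVec (x : V → ℝ) : ∑ v, (G.lapMatrix ℝ *ᵥ x) v = 0 := by
  have h : (fun _ => (1 : ℝ)) ᵥ* G.lapMatrix ℝ = 0 := by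
    rw [← mulVec_transpose, (G.isSymm_lapMatrix ℝ).eq, lapMatrix_mulVec_const_eq_zero]
  simpa [dotProduct, h] using (dotProduct_mulVec (fun _ => (1 : ℝ)) (G.lapMatrix ℝ) x)

theorem sq_sub_le_two_mul_dotProduct_lapMatrix_mulVec (x : V → ℝ) {a b : V} (hab : G.Adj a b) :
    (x a - x b) ^ 2 ≤ 2 * (x ⬝ᵥ G.lapMatrix ℝ *ᵥ x) := by
  rw [← toLinearMap₂'_apply', lapMatrix_toLinearMap₂', mul_div_cancel₀ _ two_ne_zero]
  have hnonneg : ∀ i j, 0 ≤ if G.Adj i j then (x i - x j) ^ 2 else 0 := fun i j => by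
    split_ifs <;> positivity
  calc (x a - x b) ^ 2 = if G.Adj a b then (x a - x b) ^ 2 else 0 := (if_pos hab).symm
    _ ≤ ∑ j, if G.Adj a j then (x a - x j) ^ 2 else 0 :=
        Finset.single_le_sum (fun j _ => hnonneg a j) (Finset.mem_univ b)
    _ ≤ _ := Finset.single_le_sum (f := fun i => ∑ j, if G.Adj i j then (x i - x j) ^ 2 else 0)
        (fun i _ => Finset.sum_nonneg fun j _ => hnonneg i j) (Finset.mem_univ a)

section Equilibrium

variable {ε K : ℝ} {r x : V → ℝ}

theorem mul_apply_eq_of_diagonal_sub_smul_lapMatrix_mulVec_eq_zero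
    (h : (diagonal r - ε • G.lapMatrix ℝ) *ᵥ x = 0) (v : V) :
    r v * x v = ε * (G.lapMatrix ℝ *ᵥ x) v := by
  simpa [sub_mulVec, mulVec_diagonal, smul_mulVec, sub_eq_zero] using congrFun h v

theorem sum_mul_eq_zero_of_diagonal_sub_smul_lapMatrix_mulVec_eq_zero
    (h : (diagonal r - ε • G.lapMatrix ℝ) *ᵥ x = 0) : ∑ v, r v * x v = 0 := by
  simp_rw [mul_apply_eq_of_diagonal_sub_smul_lapMatrix_mulVec_eq_zero h, ← Finset.mul_sum,
    sum_lapMatrix_mulVec, mul_zero]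

theorem dotProduct_lapMatrix_mulVec_le (hε : 0 < ε) (hK : 0 ≤ K) (hr : ∀ v, r v ≤ K) (hx : 0 ≤ x)
    (h : (diagonal r - ε • G.lapMatrix ℝ) *ᵥ x = 0) :
    x ⬝ᵥ G.lapMatrix ℝ *ᵥ x ≤ K * (∑ v, x v) ^ 2 / ε := by
  have hsq : ∑ v, x v ^ 2 ≤ (∑ v, x v) ^ 2 :=
    Finset.sum_sq_le_sq_sum_of_nonneg fun v _ => hx v
  rw [le_div_iff₀ hε]
  calc (x ⬝ᵥ G.lapMatrix ℝ *ᵥ x) * ε = ∑ v, r v * x v ^ 2 := by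
        simp_rw [dotProduct, Finset.sum_mul, sq, ← mul_assoc,
          mul_apply_eq_of_diagonal_sub_smul_lapMatrix_mulVec_eq_zero h]
        exact Finset.sum_congr rfl fun v _ => by ring
    _ ≤ ∑ v, K * x v ^ 2 := Finset.sum_le_sum fun v _ => by gcongr; exact hr v
    _ ≤ K * (∑ v, x v) ^ 2 := by rw [← Finset.mul_sum]; gcongr

theorem abs_sub_le_of_diagonal_sub_smul_lapMatrix_mulVec_eq_zero (hG : G.Preconnected)
    (hε : 0 < ε) (hr : ∀ v, |r v| ≤ K) (hx : 0 ≤ x)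
    (h : (diagonal r - ε • G.lapMatrix ℝ) *ᵥ x = 0) (u v : V) :
    |x u - x v| ≤ Fintype.card V * ((∑ w, x w) * √(2 * K / ε)) := by
  have hK : 0 ≤ K := (abs_nonneg _).trans (hr u)
  have hσ : 0 ≤ ∑ w, x w := Finset.sum_nonneg fun w _ => hx w
  refine hG.abs_sub_le_card_mul (by positivity)
    (fun a b hab => abs_le_of_sq_le_sq ?_ (by positivity)) u v
  have hform := dotProduct_lapMatrix_mulVec_le hε hK (fun w => (le_abs_self _).trans (hr w)) hx h
  calc (x a - x b) ^ 2 ≤ 2 * (x ⬝ᵥ G.lapMatrix ℝ *ᵥ x) :=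
        sq_sub_le_two_mul_dotProduct_lapMatrix_mulVec x hab
    _ ≤ 2 * (K * (∑ w, x w) ^ 2 / ε) := by gcongr
    _ = ((∑ w, x w) * √(2 * K / ε)) ^ 2 := by
        rw [mul_pow, Real.sq_sqrt (by positivity)]; ring

theorem abs_sum_le_of_diagonal_sub_smul_lapMatrix_mulVec_eq_zero (hG : G.Preconnected)
    (hε : 0 < ε) (hr : ∀ v, |r v| ≤ K) (hx : 0 ≤ x) (hσ : 0 < ∑ w, x w)
    (h : (diagonal r - ε • G.lapMatrix ℝ) *ᵥ x = 0) :
    |∑ v, r v| ≤ Fintype.card V ^ 3 * K * √(2 * K / ε) := by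
  set σ := ∑ w, x w
  set N : ℝ := (Fintype.card V : ℝ)
  set D := N * (σ * √(2 * K / ε))
  have hD : 0 ≤ D := by positivity
  have hpair := abs_sub_le_of_diagonal_sub_smul_lapMatrix_mulVec_eq_zero hG hε hr hx h
  have hbalance := sum_mul_eq_zero_of_diagonal_sub_smul_lapMatrix_mulVec_eq_zero h
  -- since `∑ r x = 0`, each `x u` can be compared with every `x v` rather than with the mean
  have hcross : σ * ∑ u, r u = ∑ u, ∑ v, r u * (x v - x u) := by
    simp only [mul_sub, Finset.sum_sub_distrib, ← Finset.mul_sum, Finset.sum_const,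
      Finset.card_univ, nsmul_eq_mul, ← Finset.sum_mul]
    rw [show ∑ u, r u * (N * x u) = N * ∑ u, r u * x u by
      rw [Finset.mul_sum]; exact Finset.sum_congr rfl fun u _ => by ring, hbalance]
    ring
  refine le_of_mul_le_mul_left ?_ hσ
  calc σ * |∑ v, r v| = |∑ u, ∑ v, r u * (x v - x u)| := by
        rw [← hcross, abs_mul, abs_of_pos hσ]
    _ ≤ ∑ u, ∑ v, |r u| * |x v - x u| := by
        refine (Finset.abs_sum_le_sum_abs _ _).trans (Finset.sum_le_sum fun u _ => ?_)
        refine (Finset.abs_sum_le_sum_abs _ _).trans_eq ?_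
        simp only [abs_mul]
    _ ≤ ∑ _u : V, ∑ _v : V, K * D :=
        Finset.sum_le_sum fun u _ => Finset.sum_le_sum fun v _ =>
          (mul_le_mul_of_nonneg_left (hpair v u) (abs_nonneg _)).trans
            (mul_le_mul_of_nonneg_right (hr u) hD)
    _ = σ * (N ^ 3 * K * √(2 * K / ε)) := by
        simp only [Finset.sum_const, Finset.card_univ, nsmul_eq_mul, D, N]; ring

end Equilibrium

instance pathGraph.decidableAdj (n : ℕ) : DecidableRel (pathGraph n).Adj :=
  fun _ _ => decidable_of_iff' _ pathGraph_adj

theorem pathGraph_degree {n : ℕ} (i : Fin n) :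
    (pathGraph n).degree i =
      (if 0 < (i : ℕ) then 1 else 0) + (if (i : ℕ) + 1 < n then 1 else 0) := by
  rw [← Nat.cast_id ((pathGraph n).degree i), degree_eq_sum_if_adj]
  simp only [pathGraph_adj]
  rw [Fin.sum_univ_eq_sum_range (fun k => if (i : ℕ) + 1 = k ∨ k + 1 = i then 1 else 0)]
  have hsplit : ∀ k, (if (i : ℕ) + 1 = k ∨ k + 1 = i then 1 else 0) =
      (if (i : ℕ) + 1 = k then 1 else 0) + (if k = (i : ℕ) - 1 ∧ 0 < (i : ℕ) then 1 else 0) := by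
    intro k; split_ifs <;> omega
  simp only [hsplit, Finset.sum_add_distrib, Finset.sum_ite_eq, Finset.mem_range, ite_and,
    Finset.sum_ite_eq']
  split_ifs <;> omega

end SimpleGraph

open SimpleGraph

theorem mutT_eq_neg_lapMatrix (n : ℕ) : mutT n = -(pathGraph n).lapMatrix ℝ := by
  ext i j
  simp only [mutT, lapMatrix, degMatrix, of_apply, Matrix.neg_apply, Matrix.sub_apply,
    diagonal_apply, adjMatrix_apply, pathGraph_adj, pathGraph_degree]
  split_ifs <;> simp_all
  norm_num

theorem Bmat_eq_diagonal_sub_smul_lapMatrix (n : ℕ) (m a : Fin n → ℝ) (s u ε : ℝ) :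
    Bmat n m a s u ε =
      diagonal (fun i => monod (m i) (a i) s - u) - ε • (pathGraph n).lapMatrix ℝ := by
  rw [Bmat, mutT_eq_neg_lapMatrix, smul_neg, ← sub_eq_add_neg, smul_one_eq_diagonal,
    diagonal_sub]

theorem abs_monod_le {m a s : ℝ} (hm : 0 ≤ m) (ha : 0 < a) (hs : 0 ≤ s) : |monod m a s| ≤ m := by
  unfold monod
  rw [abs_of_nonneg (by positivity), div_le_iff₀ (by positivity)]
  nlinarith

theorem strictMonoOn_monod {m a : ℝ} (hm : 0 < m) (ha : 0 < a) :
    StrictMonoOn (monod m a) (Ici 0) := by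
  intro s hs t ht hst
  unfold monod
  rw [div_lt_div_iff₀ (by linarith [mem_Ici.1 hs]) (by linarith [mem_Ici.1 ht])]
  nlinarith [mul_pos hm ha]

theorem tendsto_of_tendsto_comp_of_strictMonoOn {α β γ : Type*} [LinearOrder α] [TopologicalSpace α]
    [OrderTopology α] [LinearOrder β] [TopologicalSpace β] [OrderTopology β]
    {f : α → β} {g : γ → α} {l : Filter γ} {b c : α} (hf : StrictMonoOn f (Ici b)) (hc : b ≤ c)
    (hg : ∀ᶠ t in l, b ≤ g t) (hfg : Tendsto (fun t => f (g t)) l (𝓝 (f c))) :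
    Tendsto g l (𝓝 c) := by
  rw [tendsto_order] at hfg ⊢
  constructor
  · intro a hac
    rcases lt_or_ge a b with hab | hba
    · filter_upwards [hg] with t ht using hab.trans_le ht
    · filter_upwards [hg, hfg.1 _ (hf hba hc hac)] with t ht hft
      exact (hf.lt_iff_lt hba ht).1 hft
  · intro a hca
    have hba := hc.trans hca.le
    filter_upwards [hg, hfg.2 _ (hf hc hba hca)] with t ht hft
    exact (hf.lt_iff_lt ht hba).1 hft

theorem abs_sub_sum_div_card_le {ι : Type*} [Fintype ι] [Nonempty ι] {f : ι → ℝ} {D : ℝ} {i : ι}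
    (h : ∀ j, |f i - f j| ≤ D) : |f i - (∑ j, f j) / Fintype.card ι| ≤ D := by
  have hN : (0 : ℝ) < Fintype.card ι := by exact_mod_cast Fintype.card_pos
  have hmean : f i - (∑ j, f j) / Fintype.card ι = (∑ j, (f i - f j)) / Fintype.card ι := by
    rw [Finset.sum_sub_distrib, Finset.sum_const, Finset.card_univ, nsmul_eq_mul]
    field_simp
  rw [hmean, abs_div, abs_of_pos hN, div_le_iff₀ hN]
  calc |∑ j, (f i - f j)| ≤ ∑ j, |f i - f j| := Finset.abs_sum_le_sum_abs _ _
    _ ≤ ∑ _j : ι, D := Finset.sum_le_sum fun j _ => h j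
    _ = D * Fintype.card ι := by rw [Finset.sum_const, Finset.card_univ, nsmul_eq_mul, mul_comm]

def IsCoexistenceSteadyState (n : ℕ) (m a : Fin n → ℝ) (u ε : ℝ) (x : Fin n → ℝ) (s : ℝ) :
    Prop :=
  (∀ i, 0 < x i) ∧ s ∈ Ioo (0 : ℝ) 1 ∧ (Bmat n m a s u ε).mulVec x = 0 ∧ (∑ j, x j) + s = 1

namespace IsCoexistenceSteadyState

variable {n : ℕ} {m a : Fin n → ℝ} {u ε s : ℝ} {x : Fin n → ℝ}

theorem sum_eq (h : IsCoexistenceSteadyState n m a u ε x s) : ∑ j, x j = 1 - s := by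
  linarith [h.2.2.2]

theorem diagonal_sub_smul_lapMatrix_mulVec_eq_zero (h : IsCoexistenceSteadyState n m a u ε x s) :
    (diagonal (fun i => monod (m i) (a i) s - u) - ε • (pathGraph n).lapMatrix ℝ) *ᵥ x
      = 0 := by
  rw [← Bmat_eq_diagonal_sub_smul_lapMatrix]
  exact h.2.2.1

theorem abs_monod_sub_le (hm : ∀ i, 0 ≤ m i) (ha : ∀ i, 0 < a i)
    (h : IsCoexistenceSteadyState n m a u ε x s) (i : Fin n) :
    |monod (m i) (a i) s - u| ≤ |u| + ∑ j, m j := by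
  calc |monod (m i) (a i) s - u| ≤ |monod (m i) (a i) s| + |u| := abs_sub _ _
    _ ≤ ∑ j, m j + |u| := by
        gcongr
        exact (abs_monod_le (hm i) (ha i) h.2.1.1.le).trans
          (Finset.single_le_sum (fun j _ => hm j) (Finset.mem_univ i))
    _ = |u| + ∑ j, m j := add_comm _ _

theorem abs_sum_monod_sub_le (hm : ∀ i, 0 ≤ m i) (ha : ∀ i, 0 < a i) (hε : 0 < ε)
    (h : IsCoexistenceSteadyState n m a u ε x s) :
    |∑ j, monod (m j) (a j) s - n * u| ≤
      n ^ 3 * (|u| + ∑ j, m j) * √(2 * (|u| + ∑ j, m j) / ε) := by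
  have hσ : 0 < ∑ j, x j := by rw [h.sum_eq]; linarith [h.2.1.2]
  simpa [Finset.sum_sub_distrib] using
    abs_sum_le_of_diagonal_sub_smul_lapMatrix_mulVec_eq_zero
      (pathGraph_preconnected n) hε (h.abs_monod_sub_le hm ha) (fun i => (h.1 i).le)
      hσ h.diagonal_sub_smul_lapMatrix_mulVec_eq_zero

theorem abs_sub_le (hm : ∀ i, 0 ≤ m i) (ha : ∀ i, 0 < a i) (hε : 0 < ε)
    (h : IsCoexistenceSteadyState n m a u ε x s) (i : Fin n) :
    |x i - (1 - s) / n| ≤ n * √(2 * (|u| + ∑ j, m j) / ε) := by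
  have : Nonempty (Fin n) := ⟨i⟩
  have hpair := abs_sub_le_of_diagonal_sub_smul_lapMatrix_mulVec_eq_zero
    (pathGraph_preconnected n) hε (h.abs_monod_sub_le hm ha) (fun i => (h.1 i).le)
    h.diagonal_sub_smul_lapMatrix_mulVec_eq_zero
  have hσ : ∑ j, x j ≤ 1 := by rw [h.sum_eq]; linarith [h.2.1.1]
  rw [← h.sum_eq]
  have hmean := abs_sub_sum_div_card_le (f := x) (i := i)
    (D := n * √(2 * (|u| + ∑ j, m j) / ε)) fun j => ?_
  · simpa using hmean
  calc |x i - x j| ≤ n * ((∑ w, x w) * √(2 * (|u| + ∑ j, m j) / ε)) := by simpa using hpair i j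
    _ ≤ n * √(2 * (|u| + ∑ j, m j) / ε) := by
        gcongr
        exact mul_le_of_le_one_left (Real.sqrt_nonneg _) hσ

end IsCoexistenceSteadyState

theorem strictMonoOn_sum_monod {ι : Type*} [Fintype ι] [Nonempty ι] {m a : ι → ℝ}
    (hm : ∀ i, 0 < m i) (ha : ∀ i, 0 < a i) :
    StrictMonoOn (fun s => ∑ j, monod (m j) (a j) s) (Ici 0) :=
  fun _ hs _ ht hst => Finset.sum_lt_sum_of_nonempty Finset.univ_nonempty
    fun j _ => strictMonoOn_monod (hm j) (ha j) hs ht hst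

theorem stmt_15_general (n : ℕ) (hn : 1 ≤ n) (m a : Fin n → ℝ)
    (hm : ∀ i, 0 < m i) (ha : ∀ i, 0 < a i)
    (u : ℝ) (X : ℝ → Fin n → ℝ) (S : ℝ → ℝ)
    (hsteady : ∀ ε : ℝ, 0 < ε →
      (∀ i, 0 < X ε i) ∧ S ε ∈ Set.Ioo (0 : ℝ) 1 ∧
      (Bmat n m a (S ε) u ε).mulVec (X ε) = 0 ∧ (∑ j, X ε j) + S ε = 1)
    (sbar : ℝ) (hsb : 0 ≤ sbar)
    (hsbar : (1 / (n : ℝ)) * ∑ j, monod (m j) (a j) sbar = u) :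
    Tendsto S atTop (𝓝 sbar) ∧
    Tendsto X atTop (𝓝 (fun _ => (1 - sbar) / (n : ℝ))) := by
  have : Nonempty (Fin n) := ⟨⟨0, hn⟩⟩
  have hsteady' : ∀ᶠ ε in atTop, 0 < ε ∧ IsCoexistenceSteadyState n m a u ε (X ε) (S ε) := by
    filter_upwards [eventually_gt_atTop 0] with ε hε using ⟨hε, hsteady ε hε⟩
  set K := |u| + ∑ j, m j
  have hδ : Tendsto (fun ε => √(2 * K / ε)) atTop (𝓝 0) := by
    simpa using (tendsto_const_nhds.div_atTop tendsto_id).sqrt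
  have hm' : ∀ i, 0 ≤ m i := fun i => (hm i).le
  have hΦ : Tendsto (fun ε => ∑ j, monod (m j) (a j) (S ε)) atTop
      (𝓝 (∑ j, monod (m j) (a j) sbar)) := by
    have hΦsbar : ∑ j, monod (m j) (a j) sbar = n * u := by
      rw [← hsbar, ← mul_assoc, mul_one_div_cancel (by positivity), one_mul]
    rw [hΦsbar, tendsto_iff_norm_sub_tendsto_zero]
    refine squeeze_zero_norm' ?_ (by simpa using hδ.const_mul (n ^ 3 * K))
    filter_upwards [hsteady'] with ε ⟨hε, h⟩
    simpa using h.abs_sum_monod_sub_le hm' ha hε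
  have hS : Tendsto S atTop (𝓝 sbar) := by
    refine tendsto_of_tendsto_comp_of_strictMonoOn (strictMonoOn_sum_monod hm ha) hsb ?_ hΦ
    filter_upwards [hsteady'] with ε ⟨_, h⟩ using h.2.1.1.le
  refine ⟨hS, tendsto_pi_nhds.2 fun i => ?_⟩
  have hdev : Tendsto (fun ε => X ε i - (1 - S ε) / n) atTop (𝓝 0) := by
    refine squeeze_zero_norm' ?_ (by simpa using hδ.const_mul (n : ℝ))
    filter_upwards [hsteady'] with ε ⟨hε, h⟩ using h.abs_sub_le hm' ha hε i
  simpa using hdev.add (((tendsto_const_nhds (x := (1 : ℝ))).sub hS).div_const (n : ℝ))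

/-- behavior of the coexistence steady state `(x^{ε,u}, s^{ε,u})` as `ε → +∞`:
`s^{ε,u} → μ̄⁻¹(u)` and `x^{ε,u} → ((1 - μ̄⁻¹(u))/n)·(1,…,1)`. -/
theorem stmt_15 (n : ℕ) (hn : 1 ≤ n) (m a : Fin n → ℝ)
    (hm : ∀ i, 0 < m i) (ha : ∀ i, 0 < a i)
    (u : ℝ) (hu : 0 < u) (hub : u < (1 / (n : ℝ)) * ∑ j, monod (m j) (a j) 1)
    (X : ℝ → Fin n → ℝ) (S : ℝ → ℝ)
    (hsteady : ∀ ε : ℝ, 0 < ε →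
      (∀ i, 0 < X ε i) ∧ S ε ∈ Set.Ioo (0 : ℝ) 1 ∧
      (Bmat n m a (S ε) u ε).mulVec (X ε) = 0 ∧ (∑ j, X ε j) + S ε = 1)
    (sbar : ℝ) (hsb : 0 ≤ sbar)
    (hsbar : (1 / (n : ℝ)) * ∑ j, monod (m j) (a j) sbar = u) :
    Tendsto S atTop (𝓝 sbar) ∧
    Tendsto X atTop (𝓝 (fun _ => (1 - sbar) / (n : ℝ))) :=
  stmt_15_general n hn m a hm ha u X S hsteady sbar hsb hsbar
end
end
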